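/- arXiv:2604.17735 — 7 statements merged into one kernel-verified Lean document; each statement's English description precedes it below -/
import Mathlib

section
/- Let w = (1^{a_0}, m_1^{a_1}, …, m_k^{a_k}) be a divisible weight sequence. Then for every r ≥ 1, the degree r·m_k weighted-homogeneous component of S(w) is spanned by products of r weighted-homogeneous elements of degree m_k; equivalently, as submodules of S(w), the r-th power of the degree-m_k weighted-homogeneous component equals the degree r·m_k weighted-homogeneous component. (This expresses that the multiplication map Sym^r(S(w)_{m_k}) → S(w)_{r·m_k} is surjective, i.e., that the line bundle O(m_k) on P(w) is projectively normal, hence very ample.) -/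
/-!
Every monomial of weighted degree `r·m_k` can be split into `r` monomials of weighted degree
`m_k`. Since the weights form a divisibility chain and all divide `m_k`, one peels off variables
of maximal weight: if all weights occurring in a monomial divide some `t` not exceeding its
degree, removing a variable of maximal weight `w` leaves weights dividing `w`, hence `t - w`, so
induction on `t` extracts a factor of degree exactly `t`.
-/

open MvPolynomial

theorem Finsupp.exists_le_weight_eq_of_dvd {σ : Type*} (W : σ → ℕ)
    (hchain : ∀ s s', W s ∣ W s' ∨ W s' ∣ W s) (t : ℕ) (e : σ →₀ ℕ)
    (hdvd : ∀ s ∈ e.support, W s ∣ t) (ht : t ≤ weight W e) :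
    ∃ f ≤ e, weight W f = t := by
  induction t using Nat.strong_induction_on generalizing e with
  | _ t ih =>
  rcases Nat.eq_zero_or_pos t with rfl | htpos
  · exact ⟨0, zero_le, map_zero _⟩
  have hsupp : e.support.Nonempty := by
    rw [Finset.nonempty_iff_ne_empty, Ne, Finsupp.support_eq_empty]
    rintro rfl
    simp at ht
    omega
  obtain ⟨s, hs, hmax⟩ := e.support.exists_max_image W hsupp
  have hWs_pos : 0 < W s := Nat.pos_of_dvd_of_pos (hdvd s hs) htpos
  have hWs_le : W s ≤ t := Nat.le_of_dvd htpos (hdvd s hs)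
  have hsingle_le : single s 1 ≤ e :=
    single_le_iff.mpr (Nat.one_le_iff_ne_zero.mpr (mem_support_iff.mp hs))
  set e' := e - single s 1
  have he' : e' + single s 1 = e := tsub_add_cancel_of_le hsingle_le
  have hweight : weight W e' + W s = weight W e := by
    rw [← he', map_add, weight_single, one_smul]
  have hdvd' : ∀ s' ∈ e'.support, W s' ∣ t - W s := by
    intro s' hs'
    have hs'e : s' ∈ e.support := support_tsub hs'
    have hs's : W s' ∣ W s := by
      rcases hchain s' s with h | h
      · exact h
      · have hWs'_pos := Nat.pos_of_dvd_of_pos (hdvd s' hs'e) htpos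
        rw [le_antisymm (hmax s' hs'e) (Nat.le_of_dvd hWs'_pos h)]
    exact Nat.dvd_sub (hdvd s' hs'e) hs's
  obtain ⟨f, hfle, hfw⟩ := ih (t - W s) (by omega) e' hdvd' (by omega)
  refine ⟨f + single s 1, he' ▸ add_le_add_left hfle _, ?_⟩
  rw [map_add, hfw, weight_single, one_smul]
  omega

theorem Nat.dvd_of_le_of_forall_dvd_succ {m : ℕ → ℕ} {k : ℕ} (h : ∀ i < k, m i ∣ m (i + 1))
    {i j : ℕ} (hij : i ≤ j) (hjk : j ≤ k) : m i ∣ m j := by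
  induction j, hij using Nat.le_induction with
  | base => exact dvd_rfl
  | succ j _ ih => exact (ih (by omega)).trans (h j (by omega))

namespace MvPolynomial

variable {R σ : Type*} [CommSemiring R] (W : σ → ℕ)

theorem weightedHomogeneousSubmodule_mul_eq (hchain : ∀ s s', W s ∣ W s' ∨ W s' ∣ W s)
    {n : ℕ} (hn : ∀ s, W s ∣ n) (a : ℕ) :
    weightedHomogeneousSubmodule R W a * weightedHomogeneousSubmodule R W n =
      weightedHomogeneousSubmodule R W (a + n) := by
  refine le_antisymm (weightedHomogeneousSubmodule_mul W a n) fun p hp => ?_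
  rw [mem_weightedHomogeneousSubmodule] at hp
  rw [← support_sum_monomial_coeff p]
  refine Submodule.sum_mem _ fun d hd => ?_
  have hdw : Finsupp.weight W d = a + n := hp (mem_support_iff.mp hd)
  obtain ⟨f, hfle, hfw⟩ :=
    Finsupp.exists_le_weight_eq_of_dvd W hchain n d (fun s _ => hn s) (by omega)
  have hsplit : Finsupp.weight W (d - f) + n = a + n := by
    rw [← hdw, ← hfw, ← map_add, tsub_add_cancel_of_le hfle]
  rw [← tsub_add_cancel_of_le hfle, ← mul_one (coeff _ p), ← monomial_mul]
  exact Submodule.mul_mem_mul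
    (isWeightedHomogeneous_monomial _ _ _ (by omega))
    (isWeightedHomogeneous_monomial _ _ _ hfw)

theorem weightedHomogeneousSubmodule_pow_eq (hchain : ∀ s s', W s ∣ W s' ∨ W s' ∣ W s)
    {n : ℕ} (hn : ∀ s, W s ∣ n) {r : ℕ} (hr : 1 ≤ r) :
    weightedHomogeneousSubmodule R W n ^ r = weightedHomogeneousSubmodule R W (r * n) := by
  induction r, hr using Nat.le_induction with
  | base => simp
  | succ r _ ih =>
    rw [pow_succ, ih, weightedHomogeneousSubmodule_mul_eq W hchain hn, add_one_mul]

end MvPolynomial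

theorem stmt1_general (K : Type) [Field K]
    (k : ℕ) (m a : ℕ → ℕ)
    (hdvd : ∀ i, i < k → m i ∣ m (i + 1))
    (r : ℕ) (hr : 1 ≤ r) :
    (weightedHomogeneousSubmodule K
        (fun p : Σ i : Fin (k + 1), Fin (a i.1) => m p.1.1) (m k)) ^ r =
      weightedHomogeneousSubmodule K
        (fun p : Σ i : Fin (k + 1), Fin (a i.1) => m p.1.1) (r * m k) := by
  have hle (p : Σ i : Fin (k + 1), Fin (a i.1)) : p.1.1 ≤ k := Nat.lt_succ_iff.mp p.1.isLt
  refine weightedHomogeneousSubmodule_pow_eq _ (fun p q => ?_)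
    (fun p => Nat.dvd_of_le_of_forall_dvd_succ hdvd (hle p) le_rfl) hr
  rcases le_total p.1.1 q.1.1 with h | h
  · exact .inl (Nat.dvd_of_le_of_forall_dvd_succ hdvd h (hle q))
  · exact .inr (Nat.dvd_of_le_of_forall_dvd_succ hdvd h (hle p))

theorem stmt1 (K : Type) [Field K] [IsAlgClosed K]
    (k : ℕ) (m a : ℕ → ℕ)
    (hm0 : m 0 = 1) (ha0 : 2 ≤ a 0) (ha : ∀ i, 1 ≤ i → i ≤ k → 1 ≤ a i)
    (hmono : ∀ i, i < k → m i < m (i + 1)) (hdvd : ∀ i, i < k → m i ∣ m (i + 1))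
    (r : ℕ) (hr : 1 ≤ r) :
    (weightedHomogeneousSubmodule K
        (fun p : Σ i : Fin (k + 1), Fin (a i.1) => m p.1.1) (m k)) ^ r =
      weightedHomogeneousSubmodule K
        (fun p : Σ i : Fin (k + 1), Fin (a i.1) => m p.1.1) (r * m k) :=
  stmt1_general K k m a hdvd r hr
end

section
/- Let w = (1^{a_0}, m_1^{a_1}, …, m_k^{a_k}) be a divisible weight sequence with variables indexed so that x_{i,j} has weight m_i. Then every monomial of weighted degree r·m_k with r ≥ 2 factors as a product of a monomial of weighted degree m_k and a monomial of weighted degree (r−1)·m_k. Equivalently: for every exponent vector σ (a finitely supported function from the variables to ℕ) whose weighted degree Σ σ(x_{i,j})·m_i equals r·m_k with r ≥ 2, there exists an exponent vector τ with τ ≤ σ pointwise and weighted degree of τ equal to m_k. -/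
lemma key_sub {α : Type*} (W : α → ℕ) :
    ∀ T : ℕ, 0 < T → ∀ σ : α →₀ ℕ,
    (∀ x ∈ σ.support, W x ∣ T) →
    (∀ x ∈ σ.support, ∀ y ∈ σ.support, W x ∣ W y ∨ W y ∣ W x) →
    T ≤ σ.sum (fun x e => e * W x) →
    ∃ τ : α →₀ ℕ, τ ≤ σ ∧ τ.sum (fun x e => e * W x) = T := by
  intro T
  induction T using Nat.strong_induction_on with
  | _ T ih =>
  intro hT σ hdvd hchain hsum
  classical
  -- support nonempty
  have hne : σ.support.Nonempty := by
    by_contra h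
    rw [Finset.not_nonempty_iff_eq_empty] at h
    have : σ.sum (fun x e => e * W x) = 0 := by
      rw [Finsupp.sum, h, Finset.sum_empty]
    omega
  -- pick x maximizing W x
  obtain ⟨x, hx, hmax⟩ := σ.support.exists_max_image W hne
  have hWxT : W x ∣ T := hdvd x hx
  have hWxpos : 0 < W x := by
    rcases Nat.eq_zero_or_pos (W x) with h | h
    · rw [h] at hWxT; omega
    · exact h
  have hydvd : ∀ y ∈ σ.support, W y ∣ W x := by
    intro y hy
    rcases hchain x hx y hy with h | h
    · have hWy : 0 < W y := by
        have := hdvd y hy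
        rcases Nat.eq_zero_or_pos (W y) with h0 | h0
        · rw [h0] at this; omega
        · exact h0
      have h1 : W x ≤ W y := Nat.le_of_dvd hWy h
      have h2 : W y ≤ W x := hmax y hy
      have : W y = W x := le_antisymm h2 h1
      rw [this]
    · exact h
  by_cases hcase : T ≤ σ x * W x
  · refine ⟨Finsupp.single x (T / W x), ?_, ?_⟩
    · rw [Finsupp.single_le_iff]
      have := Nat.div_le_div_right (c := W x) hcase
      rwa [Nat.mul_div_cancel _ hWxpos] at this
    · rw [Finsupp.sum_single_index (by simp)]
      exact Nat.div_mul_cancel hWxT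
  · push_neg at hcase
    set c := σ x with hc
    have hcpos : 0 < c := Finsupp.mem_support_iff.mp hx |>.bot_lt
    set T' := T - c * W x with hT'
    have hT'pos : 0 < T' := by omega
    have hT'lt : T' < T := by
      have : 0 < c * W x := Nat.mul_pos hcpos hWxpos
      omega
    set σ' := σ.erase x with hσ'
    have hsup' : σ'.support ⊆ σ.support := by
      rw [hσ', Finsupp.support_erase]
      exact Finset.erase_subset _ _
    have hsplit : c * W x + σ'.sum (fun x e => e * W x) = σ.sum (fun x e => e * W x) :=
      Finsupp.add_sum_erase σ x (fun x e => e * W x) hx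
    have hdvd' : ∀ y ∈ σ'.support, W y ∣ T' := by
      intro y hy
      have h1 : W x ∣ T' := Nat.dvd_sub hWxT (Dvd.intro c (mul_comm _ _))
      exact dvd_trans (hydvd y (hsup' hy)) h1
    obtain ⟨τ', hτ'le, hτ'sum⟩ := ih T' hT'lt hT'pos σ' hdvd'
      (fun a ha b hb => hchain a (hsup' ha) b (hsup' hb)) (by omega)
    refine ⟨τ' + Finsupp.single x c, ?_, ?_⟩
    · intro y
      rcases eq_or_ne y x with rfl | hyx
      · have hτ'x : τ' y = 0 := by
          have := hτ'le y
          simpa [hσ', Finsupp.erase_same] using Nat.le_zero.mp (by simpa [hσ', Finsupp.erase_same] using this)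
        simp [hτ'x, Finsupp.single_eq_same, hc]
      · have := hτ'le y
        rw [hσ', Finsupp.erase_ne hyx] at this
        simpa [Finsupp.single_eq_of_ne' (Ne.symm hyx)] using this
    · rw [Finsupp.sum_add_index' (by simp) (fun _ b₁ b₂ => add_mul b₁ b₂ _)]
      rw [hτ'sum, Finsupp.sum_single_index (by simp)]
      omega

theorem stmt2 (k : ℕ) (m a : ℕ → ℕ)
    (hm0 : m 0 = 1) (ha0 : 2 ≤ a 0) (ha : ∀ i, 1 ≤ i → i ≤ k → 1 ≤ a i)
    (hmono : ∀ i, i < k → m i < m (i + 1)) (hdvd : ∀ i, i < k → m i ∣ m (i + 1))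
    (σ : (Σ i : Fin (k + 1), Fin (a i.1)) →₀ ℕ) (r : ℕ) (hr : 2 ≤ r)
    (hdeg : (σ.sum fun x e => e * m x.1.1) = r * m k) :
    ∃ τ : (Σ i : Fin (k + 1), Fin (a i.1)) →₀ ℕ,
      τ ≤ σ ∧ (τ.sum fun x e => e * m x.1.1) = m k := by
  have hchain : ∀ i j : ℕ, i ≤ j → j ≤ k → m i ∣ m j := by
    intro i j hij hjk
    induction j with
    | zero => cases Nat.le_zero.mp hij; exact dvd_refl _
    | succ n ihn =>
      rcases Nat.lt_or_ge i (n+1) with h | h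
      · exact dvd_trans (ihn (by omega) (by omega)) (hdvd n (by omega))
      · have : i = n + 1 := by omega
        subst this; exact dvd_refl _
  have hmpos : ∀ i, i ≤ k → 0 < m i := by
    intro i hik
    induction i with
    | zero => omega
    | succ n ihn => exact lt_trans (ihn (by omega)) (hmono n (by omega))
  have hmk : 0 < m k := hmpos k le_rfl
  apply key_sub (fun x => m x.1.1) (m k) hmk σ
  · intro x _; exact hchain x.1.1 k (Nat.lt_succ_iff.mp x.1.2) le_rfl
  · intro x _ y _
    rcases le_or_gt x.1.1 y.1.1 with h | h
    · exact Or.inl (hchain _ _ h (Nat.lt_succ_iff.mp y.1.2))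
    · exact Or.inr (hchain _ _ (le_of_lt h) (Nat.lt_succ_iff.mp x.1.2))
  · rw [hdeg]; nlinarith
end

section
/- Let d ≥ 0 and let q, m be positive integers with q' = lcm(q, m). Let c_0, …, c_d : ℤ → ℚ be functions that are periodic with period dividing q, and let f : ℕ → ℚ satisfy f(t) = Σ_{i=0}^{d} c_i(t)·t^i for all sufficiently large t. Define f'(t) = Σ_{i=0}^{⌊t/m⌋} f(t − i·m). Then there exist functions c'_0, …, c'_{d+1} : ℤ → ℚ, periodic with period dividing q', such that f'(t) = Σ_{i=0}^{d+1} c'_i(t)·t^i for all sufficiently large t, and c'_{d+1}(0) = (1/((d+1)·q'))·Σ_{0 ≤ j < q, gcd(m,q) | j} c_d(j). (This is Lemma 2.10: if X' is an m-cone over a d-dimensional subscheme X with Hilbert quasi-polynomial of period dividing q, then deg(X') = (d!/q')·Σ_{0≤j<q, gcd(m,q)|j} c_d(j), since deg(X') = (d+1)!·c'_{d+1}(0).) -/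
/-!
STATEMENT 7 (Lemma 2.10): if `f` agrees for large `t` with a quasi-polynomial of degree `d`
with period dividing `q`, and `f'(t) = Σ_{i=0}^{⌊t/m⌋} f(t − i·m)` (the Hilbert function of an
`m`-cone), then `f'` agrees for large `t` with a quasi-polynomial of degree `d+1` with period
dividing `q' = lcm(q,m)` whose leading coefficient at `0` is
`(1/((d+1)·q'))·Σ_{0 ≤ j < q, gcd(m,q) ∣ j} c_d(j)`.
-/

open Finset



noncomputable def gam (i l : ℕ) : ℚ :=
  if 1 ≤ l ∧ l ≤ i + 1 then bernoulli (i + 1 - l) * ((i + 1).choose (i + 1 - l)) / (i + 1) else 0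

lemma gam_top (i : ℕ) : gam i (i + 1) = 1 / (i + 1) := by
  simp [gam]

lemma gam_high {i l : ℕ} (h : i + 1 < l) : gam i l = 0 := by
  rw [gam, if_neg]; omega

lemma gam_zero (i : ℕ) : gam i 0 = 0 := by
  rw [gam, if_neg]; omega

lemma faulhaber' (i D : ℕ) (hiD : i ≤ D) (n : ℕ) :
    (∑ v ∈ range n, (v : ℚ) ^ i) = ∑ l ∈ range (D + 2), gam i l * (n : ℚ) ^ l := by
  have h1 : ∑ l ∈ range (D + 2), gam i l * (n : ℚ) ^ l
      = ∑ l ∈ range (i + 2), gam i l * (n : ℚ) ^ l := by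
    symm
    apply Finset.sum_subset
    · intro x hx; simp only [mem_range] at *; omega
    · intro x _ hx2
      simp only [mem_range] at hx2
      rw [gam_high (by omega), zero_mul]
  rw [h1, Finset.sum_range_succ', gam_zero, zero_mul, add_zero,
    ← Finset.sum_range_reflect (fun l => gam i (l + 1) * (n : ℚ) ^ (l + 1)) (i + 1),
    sum_range_pow]
  apply Finset.sum_congr rfl
  intro j hj
  simp only [mem_range] at hj
  have e0 : i + 1 - 1 - j = i - j := by omega
  have e1 : i - j + 1 = i + 1 - j := by omega
  have e2 : i + 1 - (i + 1 - j) = j := by omega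
  rw [e0, gam, if_pos (by omega : 1 ≤ i - j + 1 ∧ i - j + 1 ≤ i + 1), e1, e2]
  ring

lemma sum_poly (D : ℕ) (α : ℕ → ℚ) (n : ℕ) :
    ∑ v ∈ range n, ∑ i ∈ range (D + 1), α i * (v : ℚ) ^ i
      = ∑ l ∈ range (D + 2), (∑ i ∈ range (D + 1), α i * gam i l) * (n : ℚ) ^ l := by
  rw [Finset.sum_comm]
  have h : ∀ i ∈ range (D + 1), (∑ v ∈ range n, α i * (v : ℚ) ^ i)
      = ∑ l ∈ range (D + 2), α i * gam i l * (n : ℚ) ^ l := by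
    intro i hi
    simp only [mem_range] at hi
    rw [← Finset.mul_sum, faulhaber' i D (by omega), Finset.mul_sum]
    simp [mul_assoc]
  rw [Finset.sum_congr rfl h, Finset.sum_comm]
  apply Finset.sum_congr rfl
  intro l _
  rw [Finset.sum_mul]

lemma sum_poly_top (D : ℕ) (α : ℕ → ℚ) :
    (∑ i ∈ range (D + 1), α i * gam i (D + 1)) = α D / (D + 1) := by
  rw [Finset.sum_range_succ, gam_top]
  have h : ∀ i ∈ range D, α i * gam i (D + 1) = 0 := by
    intro i hi; simp only [mem_range] at hi
    rw [gam_high (by omega), mul_zero]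
  rw [Finset.sum_congr rfl h, Finset.sum_const_zero, zero_add, mul_one_div]

lemma sum_range_if_le (E j : ℕ) (h : j < E) (F : ℕ → ℚ) :
    ∑ k ∈ range (j + 1), F k = ∑ k ∈ range E, if k ≤ j then F k else 0 := by
  rw [← Finset.sum_filter]
  congr 1
  ext x
  simp only [mem_filter, mem_range]
  omega

lemma expand_poly (E : ℕ) (β : ℕ → ℚ) (b u x : ℚ) :
    ∑ j ∈ range (E + 1), β j * ((x + b) * u) ^ j
      = ∑ k ∈ range (E + 1),
          (∑ j ∈ range (E + 1), β j * u ^ j *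
            (if k ≤ j then ((j.choose k : ℚ) * b ^ (j - k)) else 0)) * x ^ k := by
  have h1 : ∀ j ∈ range (E + 1), β j * ((x + b) * u) ^ j
      = ∑ k ∈ range (E + 1),
          β j * u ^ j * (if k ≤ j then ((j.choose k : ℚ) * b ^ (j - k)) else 0) * x ^ k := by
    intro j hj
    simp only [mem_range] at hj
    have h2 : β j * ((x + b) * u) ^ j
        = ∑ k ∈ range (j + 1),
            β j * u ^ j * ((j.choose k : ℚ) * b ^ (j - k)) * x ^ k := by
      rw [mul_pow, add_pow, Finset.sum_mul, Finset.mul_sum]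
      apply Finset.sum_congr rfl
      intro k _
      ring
    rw [h2, sum_range_if_le (E + 1) j hj]
    apply Finset.sum_congr rfl
    intro k _
    split_ifs <;> ring
  rw [Finset.sum_congr rfl h1, Finset.sum_comm]
  apply Finset.sum_congr rfl
  intro k _
  rw [Finset.sum_mul]

lemma expand_poly_top (E : ℕ) (β : ℕ → ℚ) (b u : ℚ) :
    (∑ j ∈ range (E + 1), β j * u ^ j *
        (if E ≤ j then ((j.choose E : ℚ) * b ^ (j - E)) else 0)) = β E * u ^ E := by
  rw [Finset.sum_range_succ, if_pos le_rfl]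
  have h : ∀ j ∈ range E, β j * u ^ j *
      (if E ≤ j then ((j.choose E : ℚ) * b ^ (j - E)) else 0) = 0 := by
    intro j hj; simp only [mem_range] at hj
    rw [if_neg (by omega), mul_zero]
  rw [Finset.sum_congr rfl h, Finset.sum_const_zero, zero_add]
  simp

lemma sum_range_mul' (F : ℕ → ℚ) (a b : ℕ) :
    ∑ j ∈ range (a * b), F j = ∑ v ∈ range a, ∑ u ∈ range b, F (v * b + u) := by
  induction a with
  | zero => simp
  | succ a ih => rw [Nat.succ_mul, Finset.sum_range_add, ih, Finset.sum_range_succ]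


lemma nt_sum (q m e : ℕ) (hq : 0 < q) (hm : 0 < m)
    (heg : e * Nat.gcd m q = q) (φ : ℤ → ℚ)
    (hφ : ∀ x y : ℤ, x % (q : ℤ) = y % (q : ℤ) → φ x = φ y) :
    ∑ u ∈ range e, φ ((u * m : ℕ) : ℤ)
      = ∑ j ∈ (range q).filter (fun j => Nat.gcd m q ∣ j), φ ((j : ℕ) : ℤ) := by
  have hg0 : 0 < Nat.gcd m q := Nat.gcd_pos_of_pos_right m hq
  have he0 : 0 < e := by
    rcases e with _ | e
    · simp at heg; omega
    · omega
  have hED : q / Nat.gcd m q = e := Nat.div_eq_of_eq_mul_left hg0 heg.symm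
  apply Finset.sum_bij (i := fun u _ => (u * m) % q)
  · intro u hu
    simp only [mem_filter, mem_range]
    exact ⟨Nat.mod_lt _ hq,
      (Nat.dvd_mod_iff (Nat.gcd_dvd_right m q)).mpr (Dvd.dvd.mul_left (Nat.gcd_dvd_left m q) u)⟩
  · intro u₁ h₁ u₂ h₂ hh
    simp only [mem_range] at h₁ h₂
    have hmod : u₁ * m ≡ u₂ * m [MOD q] := hh
    have h3 := Nat.ModEq.cancel_right_div_gcd (m := q) (c := m) hq hmod
    rw [Nat.gcd_comm, hED] at h3
    rwa [Nat.ModEq, Nat.mod_eq_of_lt h₁, Nat.mod_eq_of_lt h₂] at h3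
  · intro j hj
    simp only [mem_filter, mem_range] at hj
    obtain ⟨hjq, hgj⟩ := hj
    set g := Nat.gcd m q with hg
    set a := Nat.gcdA m q with ha
    set j' : ℤ := ((j / g : ℕ) : ℤ) with hj'def
    have hj' : (j : ℤ) = (g : ℤ) * j' := by
      rw [hj'def, ← Nat.cast_mul, Nat.mul_div_cancel' hgj]
    have hbez : (g : ℤ) = m * a + q * Nat.gcdB m q := Nat.gcd_eq_gcd_ab m q
    set z := (a * j') % (e : ℤ) with hz
    have hz0 : 0 ≤ z := Int.emod_nonneg _ (by exact_mod_cast he0.ne')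
    have hze : z < e := Int.emod_lt_of_pos _ (by exact_mod_cast he0)
    refine ⟨z.toNat, by simp only [mem_range]; omega, ?_⟩
    have h1 : (z.toNat : ℤ) = z := Int.toNat_of_nonneg hz0
    obtain ⟨m', hm'⟩ := (Nat.gcd_dvd_left m q : g ∣ m)
    have hq_eg : (q : ℤ) = (e : ℤ) * g := by exact_mod_cast heg.symm
    have hqem : (q : ℤ) ∣ (e : ℤ) * m := ⟨m', by rw [hq_eg, hm']; push_cast; ring⟩
    have h2 : (e : ℤ) ∣ (a * j' - z) := by
      have hd := Int.emod_add_mul_ediv (a * j') (e : ℤ)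
      exact ⟨(a * j') / (e : ℤ), by rw [hz]; linarith⟩
    have h4 : (q : ℤ) ∣ (j : ℤ) - z * m := by
      have h5 : (j : ℤ) - z * m = (a * j' - z) * m + q * (Nat.gcdB m q * j') := by
        rw [hj']; linear_combination j' * hbez
      rw [h5]
      exact dvd_add (dvd_trans hqem (mul_dvd_mul_right h2 m)) (dvd_mul_right _ _)
    have h6 : ((z.toNat * m : ℕ) : ℤ) % q = (j : ℤ) % q := by
      have : (z * m : ℤ) ≡ (j : ℤ) [ZMOD (q : ℤ)] := Int.modEq_iff_dvd.mpr h4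
      push_cast [h1]
      exact this
    have h7 : (j : ℤ) % q = j := Int.emod_eq_of_lt (by positivity) (by exact_mod_cast hjq)
    have : (((z.toNat * m) % q : ℕ) : ℤ) = (j : ℤ) := by
      rw [Int.natCast_mod, h6, h7]
    exact_mod_cast this
  · intro u hu
    apply hφ
    rw [Int.natCast_mod]
    exact (Int.emod_emod_of_dvd _ dvd_rfl).symm


theorem stmt7 (d q m : ℕ) (hq : 0 < q) (hm : 0 < m) (q' : ℕ) (hq' : q' = Nat.lcm q m)
    (c : Fin (d + 1) → ℤ → ℚ) (hper : ∀ i : Fin (d + 1), ∀ t : ℤ, c i (t + q) = c i t)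
    (f : ℕ → ℚ)
    (hf : ∀ᶠ t : ℕ in Filter.atTop, f t = ∑ i : Fin (d + 1), c i (t : ℤ) * (t : ℚ) ^ (i : ℕ))
    (f' : ℕ → ℚ)
    (hf' : ∀ t : ℕ, f' t = ∑ i ∈ Finset.range (t / m + 1), f (t - i * m)) :
    ∃ c' : Fin (d + 2) → ℤ → ℚ,
      (∀ i : Fin (d + 2), ∀ t : ℤ, c' i (t + q') = c' i t) ∧
      (∀ᶠ t : ℕ in Filter.atTop,
        f' t = ∑ i : Fin (d + 2), c' i (t : ℤ) * (t : ℚ) ^ (i : ℕ)) ∧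
      c' (Fin.last (d + 1)) 0 =
        (1 / (((d : ℚ) + 1) * (q' : ℚ))) *
          ∑ j ∈ (Finset.range q).filter (fun j => Nat.gcd m q ∣ j),
            c (Fin.last d) (j : ℤ) := by
  classical
  obtain ⟨N, hN⟩ := Filter.eventually_atTop.mp hf
  have hq'pos : 0 < q' := by
    rw [hq']; exact Nat.pos_of_ne_zero (Nat.lcm_ne_zero hq.ne' hm.ne')
  have hmq' : m ∣ q' := hq' ▸ Nat.dvd_lcm_right q m
  have hqq' : q ∣ q' := hq' ▸ Nat.dvd_lcm_left q m
  obtain ⟨e, hem⟩ : ∃ e, e * m = q' := ⟨q' / m, Nat.div_mul_cancel hmq'⟩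
  have he0 : 0 < e := by
    rcases Nat.eq_zero_or_pos e with h | h
    · subst h; simp at hem; omega
    · exact h
  have heg : e * Nat.gcd m q = q := by
    have h1 : Nat.gcd m q * Nat.lcm m q = m * q := Nat.gcd_mul_lcm m q
    have h2 : Nat.lcm m q = q' := by rw [hq', Nat.lcm_comm]
    have h3 : (e * Nat.gcd m q) * m = q * m := by
      calc (e * Nat.gcd m q) * m = Nat.gcd m q * (e * m) := by ring
        _ = Nat.gcd m q * q' := by rw [hem]
        _ = m * q := by rw [← h2, h1]
        _ = q * m := Nat.mul_comm m q
    exact Nat.eq_of_mul_eq_mul_right hm h3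
  -- integer periodicity of the coefficients
  have hperZ : ∀ (i : Fin (d + 1)) (x k : ℤ), c i (x + k * q) = c i x := by
    intro i x k
    induction k using Int.induction_on with
    | zero => simp
    | succ k ih =>
      have h : x + ((k : ℤ) + 1) * q = (x + k * q) + q := by ring
      rw [h, hper, ih]
    | pred k ih =>
      have h1 : (x + (-(k : ℤ) - 1) * q) + q = x + (-(k : ℤ)) * q := by ring
      have h2 := hper i (x + (-(k : ℤ) - 1) * q)
      rw [h1] at h2
      rw [← h2]
      exact ih
  have cEq : ∀ (i : Fin (d + 1)) (x y : ℤ), x % (q : ℤ) = y % (q : ℤ) → c i x = c i y := by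
    have key : ∀ (i : Fin (d + 1)) (x : ℤ), c i x = c i (x % (q : ℤ)) := by
      intro i x
      conv_lhs => rw [← Int.emod_add_ediv_mul x (q : ℤ)]
      exact hperZ i (x % (q : ℤ)) (x / (q : ℤ))
    intro i x y h
    rw [key i x, key i y, h]
  set gg : ℕ → ℚ := fun t => ∑ i : Fin (d + 1), c i (t : ℤ) * (t : ℚ) ^ (i : ℕ) with hgg
  -- the recurrence of the cone Hilbert function
  have recur : ∀ t, f' (t + m) = f' t + f (t + m) := by
    intro t
    rw [hf' (t + m), hf' t, Nat.add_div_right t hm, Finset.sum_range_succ']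
    congr 1
    · apply Finset.sum_congr rfl
      intro i _
      congr 1
      rw [Nat.succ_mul]
      exact Nat.add_sub_add_right t m (i * m)
    · simp
  have tele : ∀ t k, f' (t + k * m) = f' t + ∑ j ∈ Finset.range k, f (t + (j + 1) * m) := by
    intro t k
    induction k with
    | zero => simp
    | succ k ih =>
      have h1 : t + (k + 1) * m = (t + k * m) + m := by ring
      rw [h1, recur, ih, Finset.sum_range_succ]
      have h2 : t + k * m + m = t + (k + 1) * m := by ring
      rw [h2]; ring
  set K₀ := N + 1 with hK₀
  set s : ℕ → ℕ → ℕ := fun ρ u => ρ + (u + 1) * m with hs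
  set A : ℕ → ℕ → ℕ → ℚ := fun ρ u k =>
    ∑ i : Fin (d + 1), if k ≤ (i : ℕ) then
      c i ((s ρ u : ℕ) : ℤ) * (((i : ℕ).choose k : ℚ)) * ((s ρ u : ℚ)) ^ ((i : ℕ) - k) * ((q' : ℚ)) ^ k
      else 0 with hA
  set B : ℕ → ℕ → ℚ := fun ρ l =>
    ∑ u ∈ Finset.range e, ∑ k ∈ Finset.range (d + 1), A ρ u k * gam k l with hB
  set R : ℤ → ℕ := fun x => (x % (q' : ℤ)).toNat with hR
  set cc : ℕ → ℤ → ℚ := fun k x =>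
    (if k = 0 then f' (R x + K₀ * q') else 0) +
    ∑ j ∈ Finset.range (d + 2), B (R x + K₀ * q') j * (1 / (q' : ℚ)) ^ j *
      (if k ≤ j then ((j.choose k : ℚ) * (-(((R x + K₀ * q' : ℕ) : ℚ))) ^ (j - k)) else 0) with hcc
  have hq'0 : ((q' : ℚ)) ≠ 0 := by exact_mod_cast hq'pos.ne'
  refine ⟨fun k x => cc (k : ℕ) x, ?_, ?_, ?_⟩
  · -- periodicity
    intro i x
    have hRper : R (x + (q' : ℤ)) = R x := by
      simp only [hR]
      congr 1
      have h : x + (q' : ℤ) = x + (q' : ℤ) * 1 := by ring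
      rw [h, Int.add_mul_emod_self_left]
    simp only [hcc, hRper]
  · -- eventual equality
    rw [Filter.eventually_atTop]
    refine ⟨(K₀ + 1) * q', ?_⟩
    intro t ht
    have hrt : R (t : ℤ) = t % q' := by
      simp only [hR]
      omega
    set r := t % q' with hr
    set ρ := r + K₀ * q' with hρ
    have hrlt : r < q' := Nat.mod_lt t hq'pos
    have hρN : N < ρ := by
      have h := Nat.le_mul_of_pos_right K₀ hq'pos
      omega
    have hdm := Nat.div_add_mod t q'
    have hK0le : K₀ + 1 ≤ t / q' := by
      rw [Nat.le_div_iff_mul_le hq'pos]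
      exact ht
    obtain ⟨n, hn⟩ : ∃ n, t / q' = K₀ + n := ⟨t / q' - K₀, by omega⟩
    have htρ : t = ρ + n * q' := by
      rw [hn] at hdm
      calc t = q' * (K₀ + n) + r := hdm.symm
        _ = r + K₀ * q' + n * q' := by ring
    have hchain : f' t = f' ρ + ∑ l ∈ Finset.range (d + 2), B ρ l * (n : ℚ) ^ l := by
      have h1 : t = ρ + (n * e) * m := by rw [htρ, ← hem]; ring
      rw [h1, tele]
      congr 1
      have h2 : ∀ j ∈ Finset.range (n * e), f (ρ + (j + 1) * m) = gg (ρ + (j + 1) * m) := by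
        intro j _
        rw [hgg]
        exact hN _ (le_trans hρN.le (Nat.le_add_right ρ _))
      rw [Finset.sum_congr rfl h2, sum_range_mul' (fun j => gg (ρ + (j + 1) * m)) n e]
      have h3 : ∀ v ∈ Finset.range n, ∀ u ∈ Finset.range e,
          gg (ρ + (v * e + u + 1) * m) = ∑ k ∈ Finset.range (d + 1), A ρ u k * (v : ℚ) ^ k := by
        intro v _ u _
        have harg : ρ + (v * e + u + 1) * m = s ρ u + v * q' := by
          simp only [hs]; rw [← hem]; ring
        rw [harg]
        have h4 : ∀ i : Fin (d + 1), c i ((s ρ u + v * q' : ℕ) : ℤ) = c i ((s ρ u : ℕ) : ℤ) := by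
          intro i
          obtain ⟨w, hw⟩ := hqq'
          have hcast : ((s ρ u + v * q' : ℕ) : ℤ)
              = ((s ρ u : ℕ) : ℤ) + ((v * w : ℕ) : ℤ) * (q : ℤ) := by
            push_cast [hw]; ring
          rw [hcast]
          exact hperZ i _ _
        calc gg (s ρ u + v * q')
            = ∑ i : Fin (d + 1), c i ((s ρ u : ℕ) : ℤ)
                * ((v : ℚ) * (q' : ℚ) + (s ρ u : ℚ)) ^ (i : ℕ) := by
              simp only [hgg]
              apply Finset.sum_congr rfl
              intro i _
              rw [h4 i]
              congr 1
              push_cast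
              ring
          _ = ∑ i : Fin (d + 1), ∑ k ∈ Finset.range (d + 1),
                (if k ≤ (i : ℕ) then
                  c i ((s ρ u : ℕ) : ℤ) * (((i : ℕ).choose k : ℚ)) * ((s ρ u : ℚ)) ^ ((i : ℕ) - k)
                    * ((q' : ℚ)) ^ k * (v : ℚ) ^ k
                  else 0) := by
              apply Finset.sum_congr rfl
              intro i _
              rw [add_pow, Finset.mul_sum,
                sum_range_if_le (d + 1) (i : ℕ) i.isLt
                  (fun k => c i ((s ρ u : ℕ) : ℤ)
                    * (((v : ℚ) * (q' : ℚ)) ^ k * ((s ρ u : ℚ)) ^ ((i : ℕ) - k)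
                      * (((i : ℕ).choose k : ℚ))))]
              apply Finset.sum_congr rfl
              intro k _
              split_ifs <;> ring
          _ = ∑ k ∈ Finset.range (d + 1), A ρ u k * (v : ℚ) ^ k := by
              rw [Finset.sum_comm]
              apply Finset.sum_congr rfl
              intro k _
              simp only [hA]
              rw [Finset.sum_mul]
              apply Finset.sum_congr rfl
              intro i _
              split_ifs <;> ring
      rw [Finset.sum_congr rfl (fun v hv => Finset.sum_congr rfl (h3 v hv)), Finset.sum_comm]
      have h6 : ∀ u ∈ Finset.range e,
          ∑ v ∈ Finset.range n, ∑ k ∈ Finset.range (d + 1), A ρ u k * (v : ℚ) ^ k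
            = ∑ l ∈ Finset.range (d + 2),
                (∑ k ∈ Finset.range (d + 1), A ρ u k * gam k l) * (n : ℚ) ^ l :=
        fun u _ => sum_poly d (A ρ u) n
      rw [Finset.sum_congr rfl h6, Finset.sum_comm]
      apply Finset.sum_congr rfl
      intro l _
      simp only [hB]
      rw [Finset.sum_mul]
    have hnQ : (n : ℚ) = ((t : ℚ) + (-(ρ : ℚ))) * (1 / (q' : ℚ)) := by
      have h : (t : ℚ) = (ρ : ℚ) + (n : ℚ) * (q' : ℚ) := by exact_mod_cast htρ
      rw [h]; field_simp; ring
    have h7 : ∑ l ∈ Finset.range (d + 2), B ρ l * (n : ℚ) ^ l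
        = ∑ k ∈ Finset.range (d + 2),
            (∑ j ∈ Finset.range (d + 2), B ρ j * (1 / (q' : ℚ)) ^ j *
              (if k ≤ j then ((j.choose k : ℚ) * (-(ρ : ℚ)) ^ (j - k)) else 0)) * (t : ℚ) ^ k := by
      calc ∑ l ∈ Finset.range (d + 2), B ρ l * (n : ℚ) ^ l
          = ∑ l ∈ Finset.range (d + 2), B ρ l * (((t : ℚ) + (-(ρ : ℚ))) * (1 / (q' : ℚ))) ^ l := by
            rw [← hnQ]
        _ = _ := expand_poly (d + 1) (B ρ) (-(ρ : ℚ)) (1 / (q' : ℚ)) (t : ℚ)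
    rw [hchain, h7]
    rw [Fin.sum_univ_eq_sum_range (fun k => cc k (t : ℤ) * (t : ℚ) ^ k) (d + 2)]
    simp only [hcc, hrt, ← hρ]
    have h8 : ∑ k ∈ Finset.range (d + 2), (if k = 0 then f' ρ else 0) * (t : ℚ) ^ k = f' ρ := by
      rw [Finset.sum_eq_single 0]
      · simp
      · intro b _ hb; rw [if_neg hb, zero_mul]
      · intro h; simp at h
    symm
    rw [Finset.sum_congr rfl (fun k (_ : k ∈ Finset.range (d + 2)) => add_mul
      (if k = 0 then f' ρ else 0)
      (∑ j ∈ Finset.range (d + 2), B ρ j * (1 / (q' : ℚ)) ^ j *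
        (if k ≤ j then ((j.choose k : ℚ) * (-(ρ : ℚ)) ^ (j - k)) else 0)) ((t : ℚ) ^ k)),
      Finset.sum_add_distrib, h8]
  · -- value at 0
    have hR0 : R (0 : ℤ) = 0 := by simp [hR]
    have hlast : ((Fin.last (d + 1) : Fin (d + 2)) : ℕ) = d + 1 := rfl
    simp only [hcc, hR0, hlast, zero_add]
    rw [if_neg (by omega : ¬ d + 1 = 0)]
    rw [expand_poly_top (d + 1) (B (K₀ * q')) (-(((K₀ * q' : ℕ) : ℚ))) (1 / (q' : ℚ))]
    have hBtop : B (K₀ * q') (d + 1)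
        = ∑ u ∈ Finset.range e, c (Fin.last d) ((s (K₀ * q') u : ℕ) : ℤ) * ((q' : ℚ)) ^ d / ((d : ℚ) + 1) := by
      simp only [hB]
      rw [Finset.sum_congr rfl (fun u (_ : u ∈ Finset.range e) => sum_poly_top d (A (K₀ * q') u))]
      apply Finset.sum_congr rfl
      intro u _
      congr 1
      simp only [hA]
      rw [Finset.sum_eq_single (Fin.last d)]
      · rw [if_pos (le_of_eq (Fin.val_last d).symm)]
        simp [Fin.val_last, Nat.choose_self]
      · intro i _ hi
        rw [if_neg]
        have h := Fin.val_lt_last hi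
        omega
      · intro h; simp at h
    rw [hBtop]
    have hsum : ∑ u ∈ Finset.range e, c (Fin.last d) ((s (K₀ * q') u : ℕ) : ℤ)
        = ∑ j ∈ (Finset.range q).filter (fun j => Nat.gcd m q ∣ j), c (Fin.last d) ((j : ℕ) : ℤ) := by
      have hF : ∀ u, c (Fin.last d) ((s (K₀ * q') u : ℕ) : ℤ)
          = c (Fin.last d) (((u + 1) * m : ℕ) : ℤ) := by
        intro u
        obtain ⟨w, hw⟩ := hqq'
        have hcast : ((s (K₀ * q') u : ℕ) : ℤ)
            = (((u + 1) * m : ℕ) : ℤ) + ((K₀ * w : ℕ) : ℤ) * (q : ℤ) := by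
          simp only [hs]; push_cast [hw]; ring
        apply cEq
        rw [hcast, Int.add_mul_emod_self_right]
      rw [Finset.sum_congr rfl (fun u _ => hF u)]
      have h1 := Finset.sum_range_succ' (fun v => c (Fin.last d) ((v * m : ℕ) : ℤ)) e
      have h2 := Finset.sum_range_succ (fun v => c (Fin.last d) ((v * m : ℕ) : ℤ)) e
      have h3 : c (Fin.last d) ((e * m : ℕ) : ℤ) = c (Fin.last d) ((0 * m : ℕ) : ℤ) := by
        apply cEq
        rw [hem]
        obtain ⟨w, hw⟩ := hqq'
        rw [hw]
        push_cast
        simp [Int.mul_emod_right]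
      have h4 : ∑ u ∈ Finset.range e, c (Fin.last d) (((u + 1) * m : ℕ) : ℤ)
          = ∑ u ∈ Finset.range e, c (Fin.last d) ((u * m : ℕ) : ℤ) := by
        linarith [h1, h2, h3]
      rw [h4]
      exact nt_sum q m e hq hm heg (c (Fin.last d)) (fun x y h => cEq (Fin.last d) x y h)
    have hpull : ∑ u ∈ Finset.range e,
        c (Fin.last d) ((s (K₀ * q') u : ℕ) : ℤ) * ((q' : ℚ)) ^ d / ((d : ℚ) + 1)
        = (∑ u ∈ Finset.range e, c (Fin.last d) ((s (K₀ * q') u : ℕ) : ℤ))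
            * (((q' : ℚ)) ^ d / ((d : ℚ) + 1)) := by
      rw [Finset.sum_mul]
      apply Finset.sum_congr rfl
      intro u _
      ring
    rw [hpull, hsum]
    have hd0 : ((d : ℚ) + 1) ≠ 0 := by positivity
    field_simp
    rw [one_div_pow, pow_succ, zero_mul, zero_add]; field_simp
end

section
/- Let d ≥ 0 and let q, m be positive integers with q' = lcm(q, m). Let c_0, …, c_d : ℤ → ℚ be periodic with period dividing q, with c_d constant, and let f : ℕ → ℚ satisfy f(t) = Σ_{i=0}^{d} c_i(t)·t^i for all sufficiently large t. Define f'(t) = Σ_{i=0}^{⌊t/m⌋} f(t − i·m). Then f' agrees for large t with a quasi-polynomial of degree d+1 with period dividing q' whose leading coefficient evaluated at 0 equals c_d(0)/((d+1)·m). (This is Remark 2.11: if the leading coefficient of the Hilbert quasi-polynomial of X is constant, then the m-cone X' over X satisfies deg(X') = deg(X)/m.) -/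
open Polynomial Finset

lemma diffPoly (Q : ℚ) (hQ : Q ≠ 0) : ∀ (n : ℕ) (P : ℚ[X]), P.natDegree ≤ n →
    ∃ R : ℚ[X], R.natDegree ≤ n + 1 ∧ (∀ x : ℚ, R.eval x - R.eval (x - Q) = P.eval x) ∧
      R.coeff (n + 1) = P.coeff n / ((n + 1) * Q) := by
  intro n
  induction n with
  | zero =>
    intro P hP
    have hPC := Polynomial.eq_C_of_natDegree_le_zero hP
    refine ⟨C (P.coeff 0 / Q) * X, ?_, ?_, ?_⟩
    · simpa using (natDegree_C_mul_le (P.coeff 0 / Q) X).trans (by simp)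
    · intro x
      rw [hPC]
      simp only [eval_mul, eval_C, eval_X]
      field_simp
      simp only [coeff_C_zero]; ring
    · simp [coeff_C_mul]
  | succ n ih =>
    intro P hP
    set a := P.coeff (n + 1) with ha
    set M : ℚ[X] := C (a / ((n + 2) * Q)) * X ^ (n + 2) with hM
    set D : ℚ[X] := M - M.comp (X - C Q) with hD
    have hMc : M.comp (X - C Q) = C (a / ((n + 2) * Q)) * (X - C Q) ^ (n + 2) := by
      simp [hM, Polynomial.mul_comp, Polynomial.pow_comp]
    have hDcoeff : ∀ k, D.coeff k =
        a / ((n + 2) * Q) * ((X ^ (n + 2) : ℚ[X]).coeff k - ((X - C Q) ^ (n + 2)).coeff k) := by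
      intro k
      rw [hD, coeff_sub, hM, hMc, coeff_C_mul, coeff_C_mul, mul_sub]
    have hsub : ((X : ℚ[X]) - C Q) = X + C (-Q) := by
      rw [map_neg, sub_eq_add_neg]
    have hDtop : D.coeff (n + 2) = 0 := by
      rw [hDcoeff, hsub, coeff_X_add_C_pow]
      simp [coeff_X_pow]
    have hDmid : D.coeff (n + 1) = a := by
      rw [hDcoeff, hsub, coeff_X_add_C_pow, coeff_X_pow]
      rw [if_neg (by omega : ¬ (n + 1 = n + 2))]
      have h1 : n + 2 - (n + 1) = 1 := by omega
      have h2 : (n + 2).choose (n + 1) = n + 2 := Nat.choose_succ_self_right (n + 1)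
      rw [h1, h2, pow_one]
      have hn2 : ((n : ℚ) + 2) ≠ 0 := by positivity
      field_simp
      push_cast; ring
    have hDdeg : D.natDegree ≤ n + 2 := by
      apply natDegree_le_iff_coeff_eq_zero.mpr
      intro N hN
      rw [hDcoeff, hsub, coeff_X_add_C_pow, coeff_X_pow]
      rw [if_neg (by omega : ¬ (N = n + 2)), Nat.choose_eq_zero_of_lt hN]
      simp
    have hDeval : ∀ x : ℚ, D.eval x = M.eval x - M.eval (x - Q) := by
      intro x
      simp [hD, eval_comp]
    -- remainder
    set P' : ℚ[X] := P - D with hP'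
    have hP'deg : P'.natDegree ≤ n := by
      apply natDegree_le_iff_coeff_eq_zero.mpr
      intro N hN
      rw [hP', coeff_sub]
      rcases eq_or_lt_of_le (Nat.succ_le_of_lt hN) with h | h
      · rw [← h, hDmid, ← ha, sub_self]
      · have hPN : P.coeff N = 0 := coeff_eq_zero_of_natDegree_lt (by omega)
        rcases eq_or_lt_of_le (Nat.succ_le_of_lt h) with h' | h'
        · rw [hPN, ← h', hDtop, sub_self]
        · rw [hPN, coeff_eq_zero_of_natDegree_lt (by omega), sub_self]
    obtain ⟨R', hR'deg, hR'eval, _⟩ := ih P' hP'deg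
    refine ⟨M + R', ?_, ?_, ?_⟩
    · refine natDegree_add_le_of_degree_le ?_ (by omega)
      exact (natDegree_C_mul_le _ _).trans (by simp)
    · intro x
      have := hR'eval x
      rw [hP'] at this
      simp only [eval_add, eval_sub] at this ⊢
      have hd := hDeval x
      linarith [hd]
    · rw [coeff_add, coeff_eq_zero_of_natDegree_lt (by omega : R'.natDegree < n + 1 + 1)]
      rw [hM, coeff_C_mul, coeff_X_pow, if_pos rfl]
      push_cast
      ring_nf


-- periodicity extension
lemma per_dvd {q : ℕ} {c : ℤ → ℚ} (h : ∀ t : ℤ, c (t + q) = c t) {a : ℤ}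
    (hd : (q : ℤ) ∣ a) (t : ℤ) : c (t + a) = c t := by
  obtain ⟨s, rfl⟩ := hd
  induction s using Int.induction_on with
  | zero => simp
  | succ k ih =>
    have : t + (q : ℤ) * (k + 1) = (t + q * k) + q := by ring
    rw [this, h, ih]
  | pred k ih =>
    have := h (t + (q : ℤ) * (-k - 1))
    have h2 : t + (q : ℤ) * (-k - 1) + q = t + q * (-k) := by ring
    rw [h2] at this
    rw [← this]
    exact ih

noncomputable def Gaux (d K m : ℕ) (c : Fin (d + 1) → ℤ → ℚ) (r : ℤ) : ℚ[X] :=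
  ∑ j ∈ Finset.range K, ∑ i : Fin (d + 1),
    C (c i (r - (j * m : ℕ))) * (X - C ((j * m : ℕ) : ℚ)) ^ (i : ℕ)

lemma Gaux_eval (d K m : ℕ) (c : Fin (d + 1) → ℤ → ℚ) (r : ℤ) (x : ℚ) :
    (Gaux d K m c r).eval x =
      ∑ j ∈ Finset.range K, ∑ i : Fin (d + 1),
        c i (r - (j * m : ℕ)) * (x - ((j * m : ℕ) : ℚ)) ^ (i : ℕ) := by
  simp only [Gaux, eval_finset_sum, eval_mul, eval_pow, eval_sub, eval_C, eval_X]

lemma Gaux_natDegree (d K m : ℕ) (c : Fin (d + 1) → ℤ → ℚ) (r : ℤ) :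
    (Gaux d K m c r).natDegree ≤ d := by
  apply natDegree_sum_le_of_forall_le
  intro j _
  apply natDegree_sum_le_of_forall_le
  intro i _
  refine (natDegree_C_mul_le _ _).trans ((natDegree_pow_le).trans ?_)
  rw [natDegree_X_sub_C, mul_one]
  exact Nat.lt_succ_iff.mp i.isLt

lemma Gaux_coeff (d K m : ℕ) (c : Fin (d + 1) → ℤ → ℚ)
    (hconst : ∀ s t : ℤ, c (Fin.last d) s = c (Fin.last d) t) (r : ℤ) :
    (Gaux d K m c r).coeff d = K * c (Fin.last d) 0 := by
  rw [Gaux, finset_sum_coeff]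
  have hterm : ∀ j ∈ Finset.range K,
      (∑ i : Fin (d + 1), C (c i (r - (j * m : ℕ))) * (X - C ((j * m : ℕ) : ℚ)) ^ (i : ℕ)).coeff d
        = c (Fin.last d) 0 := by
    intro j _
    rw [finset_sum_coeff, Fin.sum_univ_castSucc]
    have h0 : ∀ i : Fin d,
        (C (c i.castSucc (r - (j * m : ℕ))) * (X - C ((j * m : ℕ) : ℚ)) ^ (i.castSucc : ℕ)).coeff d = 0 := by
      intro i
      apply coeff_eq_zero_of_natDegree_lt
      have h1 : (C (c i.castSucc (r - (j * m : ℕ))) * (X - C ((j * m : ℕ) : ℚ)) ^ (i.castSucc : ℕ)).natDegree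
          ≤ (i.castSucc : ℕ) * (X - C ((j * m : ℕ) : ℚ)).natDegree :=
        (natDegree_C_mul_le _ _).trans natDegree_pow_le
      rw [natDegree_X_sub_C, mul_one] at h1
      exact lt_of_le_of_lt h1 (by simpa using i.isLt)
    rw [Finset.sum_eq_zero (fun i _ => h0 i), zero_add]
    have hmon : ((X - C ((j * m : ℕ) : ℚ)) ^ d).coeff d = 1 := by
      have hm : ((X - C ((j * m : ℕ) : ℚ)) ^ d).Monic := (monic_X_sub_C _).pow d
      have hdeg : ((X - C ((j * m : ℕ) : ℚ)) ^ d).natDegree = d := by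
        rw [natDegree_pow, natDegree_X_sub_C, mul_one]
      have := hm.coeff_natDegree
      rwa [hdeg] at this
    rw [coeff_C_mul]
    simp only [Fin.val_last] at hmon ⊢
    rw [hmon, mul_one]
    exact hconst _ _
  rw [Finset.sum_congr rfl hterm, Finset.sum_const, Finset.card_range, nsmul_eq_mul]


/-!
STATEMENT 8 (Remark 2.11): as in Lemma 2.10, but assuming the leading coefficient `c_d` is
constant; then the `m`-cone Hilbert function `f'` agrees for large `t` with a quasi-polynomial
of degree `d+1` with period dividing `q' = lcm(q,m)` whose leading coefficient at `0` equals
`c_d(0)/((d+1)·m)`  (i.e. `deg(X') = deg(X)/m`).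
-/

theorem stmt8 (d q m : ℕ) (hq : 0 < q) (hm : 0 < m) (q' : ℕ) (hq' : q' = Nat.lcm q m)
    (c : Fin (d + 1) → ℤ → ℚ) (hper : ∀ i : Fin (d + 1), ∀ t : ℤ, c i (t + q) = c i t)
    (hconst : ∀ s t : ℤ, c (Fin.last d) s = c (Fin.last d) t)
    (f : ℕ → ℚ)
    (hf : ∀ᶠ t : ℕ in Filter.atTop, f t = ∑ i : Fin (d + 1), c i (t : ℤ) * (t : ℚ) ^ (i : ℕ))
    (f' : ℕ → ℚ)
    (hf' : ∀ t : ℕ, f' t = ∑ i ∈ Finset.range (t / m + 1), f (t - i * m)) :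
    ∃ c' : Fin (d + 2) → ℤ → ℚ,
      (∀ i : Fin (d + 2), ∀ t : ℤ, c' i (t + q') = c' i t) ∧
      (∀ᶠ t : ℕ in Filter.atTop,
        f' t = ∑ i : Fin (d + 2), c' i (t : ℤ) * (t : ℚ) ^ (i : ℕ)) ∧
      c' (Fin.last (d + 1)) 0 = c (Fin.last d) 0 / (((d : ℚ) + 1) * (m : ℚ)) := by
  have hmq' : m ∣ q' := hq' ▸ Nat.dvd_lcm_right q m
  have hqq' : q ∣ q' := hq' ▸ Nat.dvd_lcm_left q m
  have hq'pos : 0 < q' := hq' ▸ Nat.pos_of_ne_zero (Nat.lcm_ne_zero hq.ne' hm.ne')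
  set K := q' / m with hK
  have hKm : q' = K * m := (Nat.div_mul_cancel hmq').symm
  have hKpos : 0 < K := Nat.div_pos (Nat.le_of_dvd hq'pos hmq') hm
  obtain ⟨N₀, hN₀⟩ := Filter.eventually_atTop.mp hf
  have hq'Q : ((q' : ℚ)) ≠ 0 := by positivity
  choose R hRdeg hReval hRcoeff using
    fun r : ℤ => diffPoly (q' : ℚ) hq'Q d (Gaux d K m c r) (Gaux_natDegree d K m c r)
  set F : ℕ → ℚ := fun t => (R ((t : ℤ) % q')).eval (t : ℚ) with hF
  set p : ℕ → ℚ := fun t => f' t - F t with hp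
  have hstep : ∀ t : ℕ, N₀ ≤ t → p (t + q') = p t := by
    intro t ht
    have hdivmod : (t + q') / m + 1 = K + (t / m + 1) := by
      rw [hKm, Nat.add_mul_div_right _ _ hm]
      omega
    have hf'1 : f' (t + q') = (∑ j ∈ range K, f (t + q' - j * m)) + f' t := by
      rw [hf' (t + q'), hf' t, hdivmod, Finset.sum_range_add]
      congr 1
      apply Finset.sum_congr rfl
      intro i _
      congr 1
      have h4 : (K + i) * m = q' + i * m := by rw [add_mul, ← hKm]
      omega
    have hmod : ((t + q' : ℕ) : ℤ) % q' = (t : ℤ) % q' := by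
      push_cast
      exact Int.add_emod_right _ _
    have hFdiff : F (t + q') - F t = (Gaux d K m c ((t:ℤ) % q')).eval ((t + q' : ℕ) : ℚ) := by
      have h2 : ((t + q' : ℕ) : ℚ) - (q' : ℚ) = (t : ℚ) := by push_cast; ring
      have h3 := hReval ((t : ℤ) % q') ((t + q' : ℕ) : ℚ)
      rw [h2] at h3
      simp only [hF, hmod]
      exact h3
    have hmatch : (∑ j ∈ range K, f (t + q' - j * m))
        = (Gaux d K m c ((t:ℤ) % q')).eval ((t + q' : ℕ) : ℚ) := by
      rw [Gaux_eval]
      apply Finset.sum_congr rfl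
      intro j hj
      have hjK : j < K := mem_range.mp hj
      have hjm : j * m ≤ q' := by
        calc j * m ≤ K * m := Nat.mul_le_mul_right m hjK.le
        _ = q' := hKm.symm
      have harg : N₀ ≤ t + q' - j * m := by omega
      rw [hN₀ _ harg]
      have hcast1 : ((t + q' - j * m : ℕ) : ℚ) = ((t + q' : ℕ) : ℚ) - ((j * m : ℕ) : ℚ) := by
        rw [Nat.cast_sub (by omega)]
      rw [hcast1]
      apply Finset.sum_congr rfl
      intro i _
      congr 1
      have h3 := Int.mul_ediv_add_emod (t : ℤ) (q' : ℤ)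
      have hcast2 : ((t + q' - j * m : ℕ) : ℤ)
          = ((t:ℤ) % q' - ((j * m : ℕ) : ℤ)) + (q' : ℤ) * ((t:ℤ)/q' + 1) := by
        rw [Nat.cast_sub (by omega)]
        push_cast
        linarith
      have hdvd : (q : ℤ) ∣ (q' : ℤ) * ((t:ℤ)/q' + 1) :=
        Dvd.dvd.mul_right (Int.natCast_dvd_natCast.mpr hqq') _
      rw [hcast2, per_dvd (hper i) hdvd]
    simp only [hp]
    have := hmatch
    linarith [hf'1, hFdiff, hmatch]
  set ρ : ℤ → ℚ := fun z => p (N₀ + ((z - N₀) % q').toNat) with hρ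
  have hρper : ∀ z : ℤ, ρ (z + q') = ρ z := by
    intro z
    simp only [hρ]
    congr 3
    have h5 : z + (q':ℤ) - N₀ = (z - N₀) + q' := by ring
    rw [h5, Int.add_emod_right]
  have hiter : ∀ j : ℕ, ∀ s : ℕ, N₀ ≤ s → p (s + q' * j) = p s := by
    intro j
    induction j with
    | zero => simp
    | succ j ih =>
      intro s hs
      have h6 : s + q' * (j+1) = (s + q' * j) + q' := by ring
      rw [h6, hstep (s + q' * j) (by omega), ih s hs]
  have hρeq : ∀ t : ℕ, N₀ ≤ t → p t = ρ t := by
    intro t ht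
    have h1 : t = (N₀ + (t - N₀) % q') + q' * ((t - N₀) / q') := by
      have := Nat.mod_add_div (t - N₀) q'
      omega
    have h2 : ((t:ℤ) - N₀) % q' = (((t - N₀) % q' : ℕ) : ℤ) := by
      have h7 : ((t:ℤ) - N₀) = ((t - N₀ : ℕ) : ℤ) := by omega
      rw [h7, Int.natCast_mod]
    have hrhs : ρ t = p (N₀ + (t - N₀) % q') := by
      simp only [hρ, h2, Int.toNat_natCast]
    have h8 := hiter ((t - N₀)/q') (N₀ + (t - N₀) % q') (by omega)
    rw [← h1] at h8
    rw [hrhs]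
    exact h8
  refine ⟨fun i z => (R (z % q')).coeff i + if (i:ℕ) = 0 then ρ z else 0, ?_, ?_, ?_⟩
  · intro i z
    have hmodz : (z + (q':ℤ)) % q' = z % q' := Int.add_emod_right _ _
    simp only [hmodz, hρper]
  · rw [Filter.eventually_atTop]
    refine ⟨N₀, fun t ht => ?_⟩
    have hsplit : ∑ i : Fin (d+2),
        (((R ((t:ℤ) % q')).coeff i + if (i:ℕ) = 0 then ρ t else 0) * (t:ℚ)^(i:ℕ))
        = (∑ i : Fin (d+2), (R ((t:ℤ)%q')).coeff i * (t:ℚ)^(i:ℕ)) + ρ t := by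
      simp_rw [add_mul]
      rw [Finset.sum_add_distrib]
      congr 1
      rw [Finset.sum_eq_single (0 : Fin (d+2))]
      · simp
      · intro b _ hb
        rw [if_neg (Fin.val_ne_zero_iff.mpr hb), zero_mul]
      · intro h
        exact absurd (Finset.mem_univ _) h
    have hev : (∑ i : Fin (d+2), (R ((t:ℤ)%q')).coeff i * (t:ℚ)^(i:ℕ)) = F t := by
      simp only [hF]
      rw [Polynomial.eval_eq_sum_range' (n := d + 2) (lt_of_le_of_lt (hRdeg ((t:ℤ)%q')) (by omega))]
      exact Fin.sum_univ_eq_sum_range (fun n => (R ((t:ℤ)%q')).coeff n * (t:ℚ)^n) (d+2)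
    rw [hsplit, hev, ← hρeq t ht]
    simp only [hp]
    ring
  · have h0 : ((0:ℤ) % q') = 0 := Int.zero_emod _
    simp only [Fin.val_last, h0]
    rw [if_neg (by omega : ¬ (d + 1 = 0)), add_zero, hRcoeff, Gaux_coeff d K m c hconst]
    have hq'c : ((q':ℕ):ℚ) = (K:ℚ) * m := by exact_mod_cast hKm
    have hKne : (K:ℚ) ≠ 0 := by positivity
    rw [hq'c]
    rw [show ((d:ℚ)+1)*((K:ℚ)*m) = (K:ℚ)*(((d:ℚ)+1)*m) by ring]
    rw [mul_div_mul_left _ _ hKne]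
end

section
/- Let 1 = m_0 < m_1 < … < m_k be integers with m_j dividing m_{j+1} for all j, let a_0 ≥ 2 and a_1, …, a_k ≥ 1 be integers, and let d be an integer with 1 ≤ d ≤ a_1 + ⋯ + a_k. Call a tuple of integers r = (r_0, …, r_k) feasible if 0 ≤ r_0 ≤ a_0 − 1, 0 ≤ r_j ≤ a_j for 1 ≤ j ≤ k, and Σ_{j=0}^{k} r_j = (Σ_{j=0}^{k} a_j) − d. Define f(r) = (Σ_{j=0}^{k} r_j/m_j)·(Π_{j=0}^{k} m_j^{r_j}) ∈ ℚ. Let i be the smallest index with d > a_{i+1} + ⋯ + a_k (so 1 ≤ i ≤ k), and let r* be the feasible tuple with r*_0 = a_0 − 1, r*_j = a_j for 1 ≤ j ≤ i − 1, r*_i = (Σ_{j=i}^{k} a_j) + 1 − d, and r*_j = 0 for j > i. Then f(r*) ≤ f(r) for every feasible tuple r. (This greedy minimization is the combinatorial core of Theorem 5.3: a weighted determinantal scroll of dimension d has minimal degree exactly when its profile is the one corresponding to r*.) -/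
open Finset

lemma sum_split13 {M : Type*} [AddCommMonoid M] (i k : ℕ) (hik : i ≤ k + 1) (f : ℕ → M) :
    ∑ j ∈ range (k + 1), f j = (∑ j ∈ range i, f j) + ∑ j ∈ Icc i k, f j := by
  rw [range_eq_Ico, ← Finset.sum_Ico_consecutive f (Nat.zero_le i) hik, ← range_eq_Ico,
    Finset.Ico_add_one_right_eq_Icc]

lemma icc_split13 {M : Type*} [AddCommMonoid M] (p k : ℕ) (hpk : p ≤ k) (f : ℕ → M) :
    ∑ j ∈ Icc p k, f j = f p + ∑ j ∈ Icc (p + 1) k, f j := by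
  rw [← Finset.Ico_add_one_right_eq_Icc, ← Finset.sum_Ico_consecutive f (by omega : p ≤ p + 1)
    (by omega : p + 1 ≤ k + 1), Nat.Ico_succ_singleton, Finset.sum_singleton, Finset.Ico_add_one_right_eq_Icc]


lemma exch13 (k p q : ℕ) (m : ℕ → ℕ) (hm : ∀ j, j ≤ k → 1 ≤ m j)
    (hpk : p ≤ k) (hqk : q ≤ k) (hpq : p ≠ q) (hmpq : m p ≤ m q)
    (r : ℕ → ℕ) (hrq : 1 ≤ r q) :
    (∑ j ∈ range (k + 1),
        ((if j = p then r j + 1 else if j = q then r j - 1 else r j : ℕ) : ℚ) / (m j : ℚ)) *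
      ∏ j ∈ range (k + 1),
        (m j : ℚ) ^ (if j = p then r j + 1 else if j = q then r j - 1 else r j) ≤
    (∑ j ∈ range (k + 1), (r j : ℚ) / (m j : ℚ)) * ∏ j ∈ range (k + 1), (m j : ℚ) ^ r j := by
  have hx : (0:ℚ) < m p := by exact_mod_cast hm p hpk
  have hy : (0:ℚ) < m q := by exact_mod_cast hm q hqk
  have hxy : (m p : ℚ) ≤ m q := by exact_mod_cast hmpq
  set S := ∑ j ∈ range (k + 1), (r j : ℚ) / (m j : ℚ) with hSdef
  set P := ∏ j ∈ range (k + 1), (m j : ℚ) ^ r j with hPdef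
  have hP0 : 0 < P := Finset.prod_pos (fun j hj => pow_pos
    (by exact_mod_cast hm j (Nat.lt_succ_iff.mp (mem_range.mp hj))) _)
  have hS1 : (1:ℚ) / (m q) ≤ S := by
    have h1 : (r q : ℚ) / (m q) ≤ S := Finset.single_le_sum
      (f := fun j => (r j : ℚ) / (m j : ℚ))
      (fun j _ => div_nonneg (by positivity) (by positivity))
      (mem_range.mpr (by omega))
    have h2 : (1:ℚ) / (m q) ≤ (r q : ℚ) / (m q) := by
      gcongr
      exact_mod_cast hrq
    linarith
  have hs' : (∑ j ∈ range (k + 1),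
      ((if j = p then r j + 1 else if j = q then r j - 1 else r j : ℕ) : ℚ) / (m j : ℚ))
      = S + 1 / (m p) - 1 / (m q) := by
    have hpt : ∀ j ∈ range (k + 1),
        ((if j = p then r j + 1 else if j = q then r j - 1 else r j : ℕ) : ℚ) / (m j : ℚ)
        = (r j : ℚ) / (m j) + ((if j = p then (1:ℚ) / (m p) else 0)
            + (if j = q then -(1 / (m q : ℚ)) else 0)) := by
      intro j _
      by_cases h1 : j = p
      · subst h1
        simp only [eq_self_iff_true, if_true, if_neg hpq]
        push_cast
        ring
      · by_cases h2 : j = q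
        · subst h2
          simp only [if_neg h1, eq_self_iff_true, if_true]
          rw [Nat.cast_sub hrq]
          push_cast
          ring
        · simp [h1, h2]
    rw [Finset.sum_congr rfl hpt, Finset.sum_add_distrib, Finset.sum_add_distrib,
      Finset.sum_ite_eq' (range (k+1)) p, Finset.sum_ite_eq' (range (k+1)) q]
    simp only [mem_range, Nat.lt_succ_iff, hpk, hqk, if_pos]
    rw [← hSdef]; ring
  have hp' : (∏ j ∈ range (k + 1),
      (m j : ℚ) ^ (if j = p then r j + 1 else if j = q then r j - 1 else r j))
      = P * (m p) / (m q) := by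
    have hpt : ∀ j ∈ range (k + 1),
        (m j : ℚ) ^ (if j = p then r j + 1 else if j = q then r j - 1 else r j)
        = (m j : ℚ) ^ (r j) * ((if j = p then (m p : ℚ) else 1)
            * (if j = q then ((m q : ℚ))⁻¹ else 1)) := by
      intro j _
      by_cases h1 : j = p
      · subst h1
        simp only [eq_self_iff_true, if_true, if_neg hpq]
        rw [pow_succ]; ring
      · by_cases h2 : j = q
        · subst h2
          simp only [if_neg h1, eq_self_iff_true, if_true]
          have h3 : r j - 1 + 1 = r j := Nat.sub_add_cancel hrq
          have h4 : (m j : ℚ) ^ (r j) = (m j : ℚ) ^ (r j - 1) * (m j : ℚ) := by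
            rw [← pow_succ, h3]
          rw [h4]
          field_simp
        · simp [h1, h2]
    rw [Finset.prod_congr rfl hpt, Finset.prod_mul_distrib, Finset.prod_mul_distrib,
      Finset.prod_ite_eq' (range (k+1)) p, Finset.prod_ite_eq' (range (k+1)) q]
    simp only [mem_range, Nat.lt_succ_iff, hpk, hqk, if_pos]
    rw [← hPdef, div_eq_mul_inv, mul_assoc]
  rw [hs', hp']
  have key : (S + 1 / (m p : ℚ) - 1 / (m q)) * (m p) ≤ S * (m q) := by
    have h5 : (S + 1 / (m p : ℚ) - 1 / (m q)) * (m p) = S * m p + 1 - (m p : ℚ) / (m q) := by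
      field_simp
    have h3 : (1 / (m q : ℚ)) * ((m q : ℚ) - m p) ≤ S * ((m q : ℚ) - m p) :=
      mul_le_mul_of_nonneg_right hS1 (by linarith)
    have h4 : (1 / (m q : ℚ)) * ((m q : ℚ) - m p) = 1 - (m p : ℚ) / (m q) := by
      field_simp
    rw [h5]
    nlinarith [h3, h4]
  calc (S + 1 / (m p : ℚ) - 1 / (m q)) * (P * (m p) / (m q))
      = ((S + 1 / (m p : ℚ) - 1 / (m q)) * (m p)) * (P / (m q)) := by ring
    _ ≤ (S * (m q)) * (P / (m q)) := mul_le_mul_of_nonneg_right key (by positivity)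
    _ = S * P := by field_simp

lemma main13 (k i : ℕ) (m cap rstar : ℕ → ℕ)
    (hik : i ≤ k)
    (hm1 : ∀ j, j ≤ k → 1 ≤ m j)
    (hmono : ∀ p q, p ≤ q → q ≤ k → m p ≤ m q)
    (hcap_lt : ∀ j, j < i → rstar j = cap j)
    (hcap_i : rstar i ≤ cap i)
    (hzero : ∀ j, i < j → rstar j = 0) :
    ∀ N : ℕ, ∀ r : ℕ → ℕ, (∑ j ∈ range (k + 1), r j * j = N) → (∀ j, j ≤ k → r j ≤ cap j) →
      (∑ j ∈ range (k + 1), r j = ∑ j ∈ range (k + 1), rstar j) →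
      (∑ j ∈ range (k + 1), (rstar j : ℚ) / (m j : ℚ)) *
          ∏ j ∈ range (k + 1), (m j : ℚ) ^ (rstar j) ≤
        (∑ j ∈ range (k + 1), (r j : ℚ) / (m j : ℚ)) *
          ∏ j ∈ range (k + 1), (m j : ℚ) ^ (r j) := by
  intro N
  induction N using Nat.strong_induction_on with
  | _ N IH =>
    intro r hmeas hcaps hsum
    by_cases hall : ∀ j, j ≤ k → r j = rstar j
    · have e1 : ∑ j ∈ range (k + 1), (r j : ℚ) / (m j : ℚ)
          = ∑ j ∈ range (k + 1), (rstar j : ℚ) / (m j : ℚ) :=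
        Finset.sum_congr rfl fun j hj => by
          rw [hall j (Nat.lt_succ_iff.mp (mem_range.mp hj))]
      have e2 : ∏ j ∈ range (k + 1), (m j : ℚ) ^ (r j)
          = ∏ j ∈ range (k + 1), (m j : ℚ) ^ (rstar j) :=
        Finset.prod_congr rfl fun j hj => by
          rw [hall j (Nat.lt_succ_iff.mp (mem_range.mp hj))]
      rw [e1, e2]
    · push_neg at hall
      have hex : ∃ j, j ≤ k ∧ r j ≠ rstar j := hall
      classical
      have hspec := Nat.find_spec hex
      set p := Nat.find hex with hpdef
      obtain ⟨hpk, hpd⟩ := hspec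
      have hmin : ∀ j, j < p → r j = rstar j := by
        intro j hj
        by_contra h
        exact Nat.find_min hex hj ⟨by omega, h⟩
      have htail : ∑ j ∈ Icc p k, r j = ∑ j ∈ Icc p k, rstar j := by
        have h1 := sum_split13 p k (by omega) r
        have h2 := sum_split13 p k (by omega) rstar
        have h3 : ∑ j ∈ range p, r j = ∑ j ∈ range p, rstar j :=
          Finset.sum_congr rfl fun j hj => hmin j (mem_range.mp hj)
        omega
      have hsplit_r := icc_split13 p k hpk r
      have hsplit_s := icc_split13 p k hpk rstar
      have hkey : r p < rstar p ∧ p ≤ i := by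
        rcases lt_trichotomy p i with h | h | h
        · refine ⟨lt_of_le_of_ne ?_ hpd, le_of_lt h⟩
          rw [hcap_lt p h]
          exact hcaps p hpk
        · have hz : ∑ j ∈ Icc (p + 1) k, rstar j = 0 :=
            Finset.sum_eq_zero fun j hj => hzero j (by have := mem_Icc.mp hj; omega)
          have hnn : 0 ≤ ∑ j ∈ Icc (p + 1) k, r j := Nat.zero_le _
          refine ⟨?_, le_of_eq h⟩
          omega
        · exfalso
          have hz : ∑ j ∈ Icc p k, rstar j = 0 :=
            Finset.sum_eq_zero fun j hj => hzero j (by have := mem_Icc.mp hj; omega)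
          have : r p = 0 := by omega
          have : rstar p = 0 := hzero p h
          omega
      obtain ⟨hplt, hpi⟩ := hkey
      -- find q > p with r q ≥ 1
      have hq : ∃ q, p < q ∧ q ≤ k ∧ 1 ≤ r q := by
        by_contra h
        push_neg at h
        have hz : ∑ j ∈ Icc (p + 1) k, r j = 0 :=
          Finset.sum_eq_zero fun j hj => by
            have hj' := mem_Icc.mp hj
            have := h j (by omega) hj'.2
            omega
        omega
      obtain ⟨q, hpq, hqk, hrq⟩ := hq
      set r' : ℕ → ℕ := fun j => if j = p then r j + 1 else if j = q then r j - 1 else r j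
        with hr'def
      have hone : ∀ b ∈ range (k + 1), ∀ c : ℕ → ℕ,
          ∑ j ∈ range (k + 1), (if j = b then c j else 0) = c b := by
        intro b hb c
        rw [Finset.sum_ite_eq' (range (k + 1)) b c, if_pos hb]
      have hpmem : p ∈ range (k + 1) := mem_range.mpr (by omega)
      have hqmem : q ∈ range (k + 1) := mem_range.mpr (by omega)
      have hpq' : p ≠ q := by omega
      have hsum' : ∑ j ∈ range (k + 1), r' j = ∑ j ∈ range (k + 1), r j := by
        have hpt : ∀ j ∈ range (k + 1),
            r' j + (if j = q then 1 else 0) = r j + (if j = p then 1 else 0) := by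
          intro j _
          by_cases h1 : j = p
          · subst h1; simp only [hr'def, eq_self_iff_true, if_true, if_neg hpq']
          · by_cases h2 : j = q
            · subst h2
              simp only [hr'def, if_neg h1, eq_self_iff_true, if_true]
              omega
            · simp [hr'def, h1, h2]
        have h0 := Finset.sum_congr rfl hpt
        rw [Finset.sum_add_distrib, Finset.sum_add_distrib] at h0
        rw [hone q hqmem (fun _ => 1), hone p hpmem (fun _ => 1)] at h0
        omega
      have hmeas' : ∑ j ∈ range (k + 1), r' j * j < N := by
        have hpt : ∀ j ∈ range (k + 1),
            r' j * j + (if j = q then q else 0) = r j * j + (if j = p then p else 0) := by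
          intro j _
          by_cases h1 : j = p
          · subst h1
            simp only [hr'def, eq_self_iff_true, if_true, if_neg hpq']
            ring
          · by_cases h2 : j = q
            · subst h2
              simp only [hr'def, if_neg h1, eq_self_iff_true, if_true]
              have : r j - 1 + 1 = r j := Nat.sub_add_cancel hrq
              nlinarith [this]
            · simp [hr'def, h1, h2]
        have h0 := Finset.sum_congr rfl hpt
        rw [Finset.sum_add_distrib, Finset.sum_add_distrib] at h0
        rw [hone q hqmem (fun _ => q), hone p hpmem (fun _ => p)] at h0
        omega
      have hcaps' : ∀ j, j ≤ k → r' j ≤ cap j := by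
        intro j hj
        by_cases h1 : j = p
        · subst h1
          simp only [hr'def, eq_self_iff_true, if_true]
          have hsc : rstar p ≤ cap p := by
            rcases lt_or_eq_of_le hpi with h | h
            · exact le_of_eq (hcap_lt p h)
            · rw [h]; exact hcap_i
          omega
        · by_cases h2 : j = q
          · subst h2
            simp only [hr'def, if_neg h1, eq_self_iff_true, if_true]
            have := hcaps j hj
            omega
          · simp only [hr'def, if_neg h1, if_neg h2]
            exact hcaps j hj
      have hIH := IH _ hmeas' r' rfl hcaps' (hsum'.trans hsum)
      refine le_trans hIH ?_
      exact exch13 k p q m hm1 hpk hqk hpq' (hmono p q (le_of_lt hpq) hqk) r hrq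



/-!
STATEMENT 13: the greedy minimization at the combinatorial core of Theorem 5.3.  For a
divisible chain `1 = m_0 < m_1 < ⋯ < m_k`, `a_0 ≥ 2`, `a_j ≥ 1`, and `1 ≤ d ≤ a_1 + ⋯ + a_k`,
the feasible tuple `r*` (where `i` is the smallest index with `d > a_{i+1} + ⋯ + a_k`)
minimizes `f(r) = (Σ_j r_j/m_j)·Π_j m_j^{r_j}` among all feasible tuples.
-/

theorem stmt13 (k : ℕ) (m a : ℕ → ℕ)
    (hm0 : m 0 = 1) (hmono : ∀ j, j < k → m j < m (j + 1)) (hdvd : ∀ j, j < k → m j ∣ m (j + 1))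
    (ha0 : 2 ≤ a 0) (ha : ∀ j, 1 ≤ j → j ≤ k → 1 ≤ a j)
    (d : ℕ) (hd1 : 1 ≤ d) (hd2 : d ≤ ∑ j ∈ Finset.Icc 1 k, a j)
    -- `i` is the smallest index with `d > a_{i+1} + ⋯ + a_k` (so `1 ≤ i ≤ k`):
    (i : ℕ) (hi1 : 1 ≤ i) (hik : i ≤ k)
    (hP : (∑ j ∈ Finset.Icc (i + 1) k, a j) < d)
    (hPmin : ∀ i' : ℕ, i' < i → d ≤ ∑ j ∈ Finset.Icc (i' + 1) k, a j)
    -- a feasible tuple: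
    (r : ℕ → ℕ) (hr0 : r 0 ≤ a 0 - 1) (hr : ∀ j, 1 ≤ j → j ≤ k → r j ≤ a j)
    (hrsum : ∑ j ∈ Finset.range (k + 1), r j = (∑ j ∈ Finset.range (k + 1), a j) - d) :
    ((∑ j ∈ Finset.range (k + 1),
          ((if j = 0 then a 0 - 1
            else if j < i then a j
            else if j = i then (∑ l ∈ Finset.Icc i k, a l) + 1 - d
            else 0 : ℕ) : ℚ) / (m j : ℚ)) *
        ∏ j ∈ Finset.range (k + 1),
          (m j : ℚ) ^ (if j = 0 then a 0 - 1
            else if j < i then a j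
            else if j = i then (∑ l ∈ Finset.Icc i k, a l) + 1 - d
            else 0 : ℕ)) ≤
      (∑ j ∈ Finset.range (k + 1), (r j : ℚ) / (m j : ℚ)) *
        ∏ j ∈ Finset.range (k + 1), (m j : ℚ) ^ (r j) := by
  set cap : ℕ → ℕ := fun j => if j = 0 then a 0 - 1 else a j with hcapdef
  set rstar : ℕ → ℕ := fun j => if j = 0 then a 0 - 1
      else if j < i then a j
      else if j = i then (∑ l ∈ Finset.Icc i k, a l) + 1 - d
      else 0 with hrstardef
  have hmono' : ∀ q, q ≤ k → ∀ p, p ≤ q → m p ≤ m q := by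
    intro q
    induction q with
    | zero => intro _ p hp; rw [Nat.le_zero.mp hp]
    | succ n ih =>
      intro hq p hp
      rcases Nat.lt_succ_iff_lt_or_eq.mp (Nat.lt_succ_of_le hp) with h | h
      · exact le_trans (ih (by omega) p (by omega)) (le_of_lt (hmono n (by omega)))
      · rw [h]
  have hm1 : ∀ j, j ≤ k → 1 ≤ m j := by
    intro j hj
    rw [← hm0]
    exact hmono' j hj 0 (Nat.zero_le j)
  have hcap_lt : ∀ j, j < i → rstar j = cap j := by
    intro j hj
    by_cases h0 : j = 0
    · simp [hrstardef, hcapdef, h0]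
    · simp [hrstardef, hcapdef, h0, hj]
  have hT1 : ∑ l ∈ Finset.Icc i k, a l = a i + ∑ l ∈ Finset.Icc (i + 1) k, a l :=
    icc_split13 i k hik a
  have hi0 : i ≠ 0 := by omega
  have hri : rstar i = (∑ l ∈ Finset.Icc i k, a l) + 1 - d := by
    simp only [hrstardef]
    rw [if_neg hi0, if_neg (lt_irrefl i)]
    simp
  have hcap_i : rstar i ≤ cap i := by
    rw [hri, show cap i = a i by simp [hcapdef, hi0]]
    omega
  have hzero : ∀ j, i < j → rstar j = 0 := by
    intro j hj
    have h0 : j ≠ 0 := by omega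
    have h1 : ¬ j < i := by omega
    have h2 : j ≠ i := by omega
    simp [hrstardef, h0, h1, h2]
  have hcaps : ∀ j, j ≤ k → r j ≤ cap j := by
    intro j hj
    by_cases h0 : j = 0
    · subst h0; simpa [hcapdef] using hr0
    · simp only [hcapdef, if_neg h0]
      exact hr j (by omega) hj
  have hT : d ≤ ∑ l ∈ Finset.Icc i k, a l := by
    have h := hPmin (i - 1) (by omega)
    rwa [show i - 1 + 1 = i by omega] at h
  have hstar_sum : ∑ j ∈ Finset.range (k + 1), rstar j
      = (∑ j ∈ Finset.range (k + 1), a j) - d := by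
    have hs1 := sum_split13 i k (by omega) rstar
    have hsa := sum_split13 i k (by omega) a
    have hs2 : ∑ j ∈ Finset.Icc i k, rstar j
        = rstar i + ∑ j ∈ Finset.Icc (i + 1) k, rstar j := icc_split13 i k hik rstar
    have hs2' : ∑ j ∈ Finset.Icc (i + 1) k, rstar j = 0 :=
      Finset.sum_eq_zero fun j hj => hzero j (by have := Finset.mem_Icc.mp hj; omega)
    have hs3 : (∑ j ∈ Finset.range i, rstar j) + 1 = ∑ j ∈ Finset.range i, a j := by
      have hpt : ∀ j ∈ Finset.range i, rstar j + (if j = 0 then 1 else 0) = a j := by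
        intro j hj
        by_cases h0 : j = 0
        · subst h0; simp [hrstardef]; omega
        · simp [hrstardef, h0, Finset.mem_range.mp hj]
      have h0 := Finset.sum_congr rfl hpt
      rw [Finset.sum_add_distrib, Finset.sum_ite_eq' (Finset.range i) 0 (fun _ => 1),
        if_pos (Finset.mem_range.mpr (by omega))] at h0
      have hglue : (Finset.range i).sum a = ∑ j ∈ Finset.range i, a j := rfl
      have hglue2 : (Finset.range i).sum rstar = ∑ j ∈ Finset.range i, rstar j := rfl
      omega
    have hglue : (Finset.range i).sum a = ∑ j ∈ Finset.range i, a j := rfl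
    have hglue2 : (Finset.range i).sum rstar = ∑ j ∈ Finset.range i, rstar j := rfl
    omega
  exact main13 k i m cap rstar hik hm1 (fun p q h1 h2 => hmono' q h2 p h1) hcap_lt hcap_i hzero
    (∑ j ∈ Finset.range (k + 1), r j * j) r rfl hcaps
    (hrsum.trans hstar_sum.symm)
end

section
/- Let m_0, …, m_k be positive integers and r_0, …, r_k nonnegative integers with N = Σ_{ℓ=0}^{k} r_ℓ ≥ 1. Consider the polynomial Φ(x, t) = Π_{ℓ=0}^{k} (1 − t^{m_ℓ}·x)^{r_ℓ} in ℤ[x, t]. Then for every 1 ≤ c ≤ N, the largest j such that the coefficient of t^j·x^c in Φ is nonzero equals the sum of the c largest elements of the multiset in which m_ℓ appears with multiplicity r_ℓ. (This is the content of Lemma 5.7: for a weighted determinantal scroll with profile u = (m_0^{r_0}, …, m_k^{r_k}), whose graded Betti numbers β_{i,j} are i times the coefficient of t^j x^{i+1} in Φ, the maximal j with β_{i,j} ≠ 0 equals u^{i+1}, the sum of the greatest i+1 entries of the profile.) -/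
open Polynomial
lemma key15 (M : Multiset ℕ) (c : ℕ) :
    ((M.map (fun a => (1 : Polynomial (Polynomial ℤ)) - C ((X : Polynomial ℤ) ^ a) * X)).prod).coeff c
      = (-1) ^ c * ((M.powersetCard c).map (fun S => (X : Polynomial ℤ) ^ S.sum)).sum := by
  induction M using Multiset.induction generalizing c with
  | empty =>
    cases c with
    | zero => simp
    | succ n =>
      simp [Polynomial.coeff_one, Multiset.powersetCard_zero_right]
  | cons a M ih =>
    cases c with
    | zero =>
      rw [Multiset.map_cons, Multiset.prod_cons, Polynomial.mul_coeff_zero, ih]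
      simp
    | succ n =>
      rw [Multiset.map_cons, Multiset.prod_cons, sub_mul, one_mul, Polynomial.coeff_sub,
        mul_assoc, Polynomial.coeff_C_mul, Polynomial.coeff_X_mul, ih, ih,
        Multiset.powersetCard_cons, Multiset.map_add, Multiset.sum_add, Multiset.map_map]
      have h2 : ((Multiset.powersetCard n M).map
          ((fun S : Multiset ℕ => (X : Polynomial ℤ) ^ S.sum) ∘ (a ::ₘ ·))).sum
          = (X : Polynomial ℤ) ^ a * ((Multiset.powersetCard n M).map
            (fun S : Multiset ℕ => (X : Polynomial ℤ) ^ S.sum)).sum := by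
        rw [← Multiset.sum_map_mul_left]
        refine congrArg Multiset.sum (Multiset.map_congr rfl ?_)
        intro S _
        simp [pow_add]
      rw [h2]
      ring

lemma take_sum_le15 (a : ℕ) (L : List ℕ) (h : ∀ x ∈ L, x ≤ a) :
    ∀ n, (L.take (n + 1)).sum ≤ (L.take n).sum + a := by
  induction L with
  | nil => simp
  | cons x L ih =>
    intro n
    cases n with
    | zero => simpa using h x (by simp)
    | succ n =>
      simp only [List.take_succ_cons, List.sum_cons]
      have := ih (fun y hy => h y (by simp [hy])) n
      omega

lemma sum_le_sorted15 (L : List ℕ) (hL : L.Pairwise (fun a b => b ≤ a)) : ∀ (S : Multiset ℕ),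
    S ≤ ↑L → S.sum ≤ (L.take (Multiset.card S)).sum := by
  induction L with
  | nil =>
    intro S hS
    have : S = 0 := Multiset.le_zero.mp (by simpa using hS)
    simp [this]
  | cons a L ih =>
    intro S hS
    have hLa : ∀ x ∈ L, x ≤ a := (List.pairwise_cons.mp hL).1
    by_cases ha : a ∈ S
    · obtain ⟨S', rfl⟩ := Multiset.exists_cons_of_mem ha
      have hS' : S' ≤ ↑L := by
        have := Multiset.erase_le_erase a hS
        rw [Multiset.erase_cons_head] at this
        rw [← Multiset.cons_coe, Multiset.erase_cons_head] at this
        exact this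
      have := ih (List.pairwise_cons.mp hL).2 S' hS'
      simp only [Multiset.sum_cons, Multiset.card_cons, List.take_succ_cons, List.sum_cons]
      omega
    · have hS' : S ≤ ↑L := by
        have h1 := Multiset.erase_le_erase a hS
        rwa [Multiset.erase_of_notMem ha, ← Multiset.cons_coe,
          Multiset.erase_cons_head] at h1
      have h2 := ih (List.pairwise_cons.mp hL).2 S hS'
      refine h2.trans ?_
      cases hc : Multiset.card S with
      | zero => simp
      | succ n =>
        simp only [List.take_succ_cons, List.sum_cons]
        have := take_sum_le15 a L hLa n
        omega

lemma coeff_msum15 (s : Multiset (Polynomial ℤ)) (D : ℕ) :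
    s.sum.coeff D = (s.map (fun p => p.coeff D)).sum := by
  induction s using Multiset.induction with
  | empty => simp
  | cons a s ih => simp [ih]

lemma natDegree_msum_le15 {R : Type*} [Semiring R] (s : Multiset (Polynomial R)) (D : ℕ)
    (h : ∀ p ∈ s, p.natDegree ≤ D) : s.sum.natDegree ≤ D := by
  induction s using Multiset.induction with
  | empty => simp
  | cons a s ih =>
    rw [Multiset.sum_cons]
    exact (Polynomial.natDegree_add_le _ _).trans (max_le (h a (by simp))
      (ih fun p hp => h p (by simp [hp])))

lemma main15 (M : Multiset ℕ) (c : ℕ) (hcN : c ≤ Multiset.card M) :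
    ((M.map (fun a => (1 : Polynomial (Polynomial ℤ)) - C ((X : Polynomial ℤ) ^ a) * X)).prod).coeff c ≠ 0 ∧
      (((M.map (fun a => (1 : Polynomial (Polynomial ℤ)) - C ((X : Polynomial ℤ) ^ a) * X)).prod).coeff c).natDegree
        = ((Multiset.sort M (· ≤ ·)).reverse.take c).sum := by
  set L : List ℕ := (Multiset.sort M (· ≤ ·)).reverse with hL
  have hLM : (↑L : Multiset ℕ) = M := by
    rw [hL, Multiset.coe_reverse, Multiset.sort_eq]
  have hLlen : L.length = Multiset.card M := by
    have := congrArg Multiset.card hLM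
    simpa using this
  have hLsor : L.Pairwise (fun a b => b ≤ a) := by
    rw [hL]
    exact List.pairwise_reverse.mpr (Multiset.pairwise_sort (s := M) (r := (· ≤ ·)))
  set D : ℕ := (L.take c).sum with hD
  set T : Polynomial ℤ := ((M.powersetCard c).map (fun S => (X : Polynomial ℤ) ^ S.sum)).sum
    with hT
  have hS0le : (↑(L.take c) : Multiset ℕ) ≤ M := by
    rw [← hLM]
    exact Multiset.coe_le.mpr (L.take_sublist c).subperm
  have hS0card : Multiset.card (↑(L.take c) : Multiset ℕ) = c := by
    simp only [Multiset.coe_card, List.length_take]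
    omega
  have hS0mem : (↑(L.take c) : Multiset ℕ) ∈ M.powersetCard c :=
    Multiset.mem_powersetCard.mpr ⟨hS0le, hS0card⟩
  have hTD : 1 ≤ T.coeff D := by
    rw [hT, coeff_msum15, Multiset.map_map]
    refine Multiset.single_le_sum ?_ 1 ?_
    · intro x hx
      obtain ⟨S, hS, rfl⟩ := Multiset.mem_map.mp hx
      simp only [Function.comp_apply, Polynomial.coeff_X_pow]
      split <;> norm_num
    · rw [Multiset.mem_map]
      refine ⟨↑(L.take c), hS0mem, ?_⟩
      simp [Polynomial.coeff_X_pow, hD]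
  have hTne : T ≠ 0 := by
    intro h
    rw [h, Polynomial.coeff_zero] at hTD
    exact absurd hTD (by norm_num)
  have hdegle : T.natDegree ≤ D := by
    refine natDegree_msum_le15 _ _ ?_
    intro p hp
    obtain ⟨S, hS, rfl⟩ := Multiset.mem_map.mp hp
    rw [Polynomial.natDegree_X_pow]
    obtain ⟨hSle, hScard⟩ := Multiset.mem_powersetCard.mp hS
    have := sum_le_sorted15 L hLsor S (hLM ▸ hSle)
    rwa [hScard] at this
  have hdeg : T.natDegree = D :=
    le_antisymm hdegle (Polynomial.le_natDegree_of_ne_zero (by omega))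
  rw [key15, ← hT]
  constructor
  · exact mul_ne_zero (pow_ne_zero _ (by norm_num)) hTne
  · rcases Nat.even_or_odd c with h | h
    · rw [h.neg_one_pow, one_mul, hdeg]
    · rw [h.neg_one_pow, neg_one_mul, Polynomial.natDegree_neg, hdeg]

theorem stmt15 (k : ℕ) (m r : ℕ → ℕ) (hm : ∀ ℓ ≤ k, 0 < m ℓ)
    (N : ℕ) (hN : N = ∑ ℓ ∈ Finset.range (k + 1), r ℓ) (hN1 : 1 ≤ N)
    (Φ : Polynomial (Polynomial ℤ))
    (hΦ : Φ = ∏ ℓ ∈ Finset.range (k + 1),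
      (1 - Polynomial.C (Polynomial.X ^ (m ℓ)) * Polynomial.X) ^ (r ℓ))
    (c : ℕ) (hc1 : 1 ≤ c) (hcN : c ≤ N) :
    Φ.coeff c ≠ 0 ∧
      (Φ.coeff c).natDegree =
        ((Multiset.sort
            (∑ ℓ ∈ Finset.range (k + 1), Multiset.replicate (r ℓ) (m ℓ)) (· ≤ ·)).reverse.take c).sum := by
  have hcard : ∀ s : Finset ℕ,
      Multiset.card (∑ ℓ ∈ s, Multiset.replicate (r ℓ) (m ℓ)) = ∑ ℓ ∈ s, r ℓ := by
    intro s
    induction s using Finset.induction with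
    | empty => simp
    | insert _ _ h ih => rw [Finset.sum_insert h, Finset.sum_insert h, Multiset.card_add,
        Multiset.card_replicate, ih]
  have hΦM : Φ = (((∑ ℓ ∈ Finset.range (k + 1), Multiset.replicate (r ℓ) (m ℓ))).map
      (fun a => (1 : Polynomial (Polynomial ℤ)) - C ((X : Polynomial ℤ) ^ a) * X)).prod := by
    rw [hΦ]
    rw [show (Multiset.map (fun a => (1 : Polynomial (Polynomial ℤ)) - C ((X : Polynomial ℤ) ^ a) * X)
          (∑ ℓ ∈ Finset.range (k + 1), Multiset.replicate (r ℓ) (m ℓ)))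
        = ∑ ℓ ∈ Finset.range (k + 1), (Multiset.replicate (r ℓ) (m ℓ)).map
          (fun a => (1 : Polynomial (Polynomial ℤ)) - C ((X : Polynomial ℤ) ^ a) * X) from
      map_sum (Multiset.mapAddMonoidHom _) _ _, Multiset.prod_sum]
    refine Finset.prod_congr rfl fun ℓ _ => ?_
    rw [Multiset.map_replicate, Multiset.prod_replicate]
  rw [hΦM]
  exact main15 _ c (by rw [hcard, ← hN]; exact hcN)
end

section
/- Let a_1, a_2, a_3 ≥ 1 and b ≥ 0 be integers. Then the polynomial F(t) = 1 − t^{a_1+a_2+b} − t^{a_1+a_3+b} − t^{a_2+a_3+b} + t^{a_1+a_2+a_3+b} + t^{a_1+a_2+a_3+2b} in ℤ[t] is divisible by (1 − t)², and writing F(t) = (1 − t)²·P(t), one has P(1) = b·(a_1 + a_2 + a_3 + b) + a_1·a_2 + a_1·a_3 + a_2·a_3. (This is the computation at the heart of Proposition 6.1: a Cohen–Macaulay determinantal curve in P(w_0, w_1, w_2, w_3) defined by the 2×2 minors of a 2×3 matrix with profile (a_1, a_2, a_3; b) has Hilbert series F(t)/Π_{i=0}^{3}(1−t^{w_i}) and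 hence degree (b(a_1+a_2+a_3+b) + a_1a_2 + a_1a_3 + a_2a_3)/(w_0 w_1 w_2 w_3).) -/
/-!
STATEMENT 16 (core of Proposition 6.1): for integers `a_1, a_2, a_3 ≥ 1` and `b ≥ 0`, the
polynomial
`F(t) = 1 − t^{a_1+a_2+b} − t^{a_1+a_3+b} − t^{a_2+a_3+b} + t^{a_1+a_2+a_3+b} + t^{a_1+a_2+a_3+2b}`
is divisible by `(1 − t)²`, and if `F = (1 − t)²·P` then
`P(1) = b(a_1+a_2+a_3+b) + a_1a_2 + a_1a_3 + a_2a_3`.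
-/

open Polynomial

lemma sq_dvd_of_double_root (p : ℤ[X]) (h0 : p.eval 1 = 0)
    (h1 : p.derivative.eval 1 = 0) : (1 - X : ℤ[X]) ^ 2 ∣ p := by
  have e : (1 - X : ℤ[X]) ^ 2 = (X - C 1) ^ 2 := by simp; ring
  rw [e]
  obtain ⟨q, hq⟩ : (X - C (1:ℤ)) ∣ p := dvd_iff_isRoot.mpr h0
  have hq1 : q.eval 1 = 0 := by
    have := congrArg (fun r => Polynomial.eval 1 (derivative r)) hq
    simp [derivative_mul] at this
    simpa [this] using h1
  obtain ⟨r, hr⟩ : (X - C (1:ℤ)) ∣ q := dvd_iff_isRoot.mpr hq1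
  exact ⟨r, by rw [hq, hr]; ring⟩

theorem stmt16 (a1 a2 a3 b : ℕ) (h1 : 1 ≤ a1) (h2 : 1 ≤ a2) (h3 : 1 ≤ a3) :
    ((1 - X : ℤ[X]) ^ 2 ∣
      (1 - X ^ (a1 + a2 + b) - X ^ (a1 + a3 + b) - X ^ (a2 + a3 + b)
        + X ^ (a1 + a2 + a3 + b) + X ^ (a1 + a2 + a3 + 2 * b))) ∧
    ∀ P : ℤ[X],
      (1 - X ^ (a1 + a2 + b) - X ^ (a1 + a3 + b) - X ^ (a2 + a3 + b)
        + X ^ (a1 + a2 + a3 + b) + X ^ (a1 + a2 + a3 + 2 * b)) = (1 - X) ^ 2 * P →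
      P.eval 1 = ((b * (a1 + a2 + a3 + b) + a1 * a2 + a1 * a3 + a2 * a3 : ℕ) : ℤ) := by
  constructor
  · apply sq_dvd_of_double_root
    · simp
    · simp only [derivative_sub, derivative_add, derivative_one, derivative_X_pow, eval_sub,
        eval_add, eval_zero, eval_mul, eval_C, eval_pow, eval_one, eval_X, one_pow, mul_one]
      push_cast
      ring
  · intro P hP
    have h := congrArg (fun q => Polynomial.eval 1 (derivative (derivative q))) hP
    simp [derivative_mul, derivative_pow, mul_add, add_mul] at h
    have c1 : ((a1 + a2 + b - 1 : ℕ) : ℤ) = (a1:ℤ) + a2 + b - 1 := by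
      rw [Nat.cast_sub (by omega)]; push_cast; ring
    have c2 : ((a1 + a3 + b - 1 : ℕ) : ℤ) = (a1:ℤ) + a3 + b - 1 := by
      rw [Nat.cast_sub (by omega)]; push_cast; ring
    have c3 : ((a2 + a3 + b - 1 : ℕ) : ℤ) = (a2:ℤ) + a3 + b - 1 := by
      rw [Nat.cast_sub (by omega)]; push_cast; ring
    have c4 : ((a1 + a2 + a3 + b - 1 : ℕ) : ℤ) = (a1:ℤ) + a2 + a3 + b - 1 := by
      rw [Nat.cast_sub (by omega)]; push_cast; ring
    have c5 : ((a1 + a2 + a3 + 2 * b - 1 : ℕ) : ℤ) = (a1:ℤ) + a2 + a3 + 2*b - 1 := by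
      rw [Nat.cast_sub (by omega)]; push_cast; ring
    rw [c1, c2, c3, c4, c5] at h
    have key : (2:ℤ) * P.eval 1 =
        2 * ((b * (a1 + a2 + a3 + b) + a1 * a2 + a1 * a3 + a2 * a3 : ℕ) : ℤ) := by
      push_cast
      linear_combination -h
    exact mul_left_cancel₀ two_ne_zero key
end
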